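/- arXiv:2211.04848 — 5 statements merged into one kernel-verified Lean document; each statement's English description precedes it below -/
import Mathlib

section
/- Let Γ = (V,E) be a finite connected graph, {α,β} ∈ E, G ≤ Aut(Γ), and G* = ⟨G_α, G_β⟩. Assume G_α acts transitively on Γ(α) and G_β acts transitively on Γ(β). Then: (a) Γ is G*-locally arc-transitive; (b) Γ is G*-locally primitive if and only if G_α acts primitively on Γ(α) and G_β acts primitively on Γ(β); (c) either Γ is not bipartite, G = G* and G is transitive on V, or Γ is bipartite with the two parts of the bipartition equal to the two orbits of G* on V, and |G : G*| ≤ 2, where |G : G*| = 2 holds if and only if G is transitive on V. -/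
def IsAutGroup {V : Type*} (Γ : SimpleGraph V) (G : Subgroup (Equiv.Perm V)) : Prop :=
  ∀ g ∈ G, ∀ u v : V, Γ.Adj u v → Γ.Adj (g u) (g v)

def stabOf {V : Type*} (G : Subgroup (Equiv.Perm V)) (α : V) : Subgroup (Equiv.Perm V) :=
  G ⊓ MulAction.stabilizer (Equiv.Perm V) α

def TransOn {V : Type*} (H : Subgroup (Equiv.Perm V)) (S : Set V) : Prop :=
  ∀ x ∈ S, ∀ y ∈ S, ∃ g ∈ H, g x = y

def IsBlockOn {V : Type*} (H : Subgroup (Equiv.Perm V)) (S B : Set V) : Prop :=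
  B ⊆ S ∧ ∀ g ∈ H, (⇑g '' B) = B ∨ Disjoint (⇑g '' B) B

def PrimOn {V : Type*} (H : Subgroup (Equiv.Perm V)) (S : Set V) : Prop :=
  TransOn H S ∧ ∀ B : Set V, IsBlockOn H S B → B.Subsingleton ∨ B = S

def orbitOf {V : Type*} (H : Subgroup (Equiv.Perm V)) (γ : V) : Set V :=
  {v | ∃ g ∈ H, g γ = v}

def IsBipartition {V : Type*} (Γ : SimpleGraph V) (U W : Set V) : Prop :=
  (∀ v, (v ∈ U ↔ v ∉ W)) ∧ ∀ a b : V, Γ.Adj a b → (a ∈ U ∧ b ∈ W) ∨ (a ∈ W ∧ b ∈ U)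

/-!
By local transitivity at the edge `{α, β}`, the neighbours of a vertex in the `G*`-orbit of `α`
lie in the `G*`-orbit of `β` and vice versa, so by connectivity these two orbits cover `V`, and
the local action at any vertex is conjugate in `G*` to the one at `α` or at `β`. If the two orbits
coincide, the Frattini argument `G = G* G_α` gives `G = G*`; and `Γ` is not bipartite, since
vertex stabilizers fix each part of the (unique) bipartition of a connected graph, so `G*` could
not move `α` to its neighbour `β`. Otherwise the two orbits form the bipartition, `G` permutes its
two parts, and `G*` is the stabilizer in `G` of the part containing `α`, so `|G : G*|` is the
length of an orbit on a two-element set.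
-/

section PermutationGroups

variable {V : Type*} {G H K L : Subgroup (Equiv.Perm V)} {g k : Equiv.Perm V} {γ δ v : V} {S : Set V}

lemma mem_stabOf : g ∈ stabOf G δ ↔ g ∈ G ∧ g δ = δ := Iff.rfl

lemma stabOf_eq_of_le (hle : H ≤ G) (hs : stabOf G δ ≤ H) : stabOf H δ = stabOf G δ :=
  le_antisymm (inf_le_inf_right _ hle) (le_inf hs inf_le_right)

lemma mul_mul_inv_mem_stabOf (hg : g ∈ H) (hk : k ∈ stabOf H δ) :
    g * k * g⁻¹ ∈ stabOf H (g δ) :=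
  mem_stabOf.2 ⟨mul_mem (mul_mem hg hk.1) (inv_mem hg), by simp [(mem_stabOf.1 hk).2]⟩

lemma mem_orbitOf_self (H : Subgroup (Equiv.Perm V)) (γ : V) : γ ∈ orbitOf H γ :=
  ⟨1, one_mem H, rfl⟩

lemma apply_mem_orbitOf (hg : g ∈ H) (hv : v ∈ orbitOf H γ) : g v ∈ orbitOf H γ := by
  obtain ⟨h, hh, rfl⟩ := hv
  exact ⟨g * h, mul_mem hg hh, rfl⟩

lemma orbitOf_eq_of_mem (hv : v ∈ orbitOf H γ) : orbitOf H v = orbitOf H γ := by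
  obtain ⟨h, hh, rfl⟩ := hv
  ext w
  constructor
  · rintro ⟨k, hk, rfl⟩
    exact ⟨k * h, mul_mem hk hh, rfl⟩
  · rintro ⟨k, hk, rfl⟩
    exact ⟨k * h⁻¹, mul_mem hk (inv_mem hh), by simp⟩

lemma orbitOf_mono (hle : H ≤ G) : orbitOf H γ ⊆ orbitOf G γ := by
  rintro _ ⟨h, hh, rfl⟩
  exact ⟨h, hle hh, rfl⟩

lemma disjoint_orbitOf (h : δ ∉ orbitOf H γ) : Disjoint (orbitOf H γ) (orbitOf H δ) :=
  Set.disjoint_left.2 fun _ hγ hδ =>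
    h (orbitOf_eq_of_mem hγ ▸ orbitOf_eq_of_mem hδ ▸ mem_orbitOf_self H δ)

lemma image_orbitOf (hg : g ∈ H) : ⇑g '' orbitOf H γ = orbitOf H γ := by
  refine Set.Subset.antisymm (Set.image_subset_iff.2 fun _ hv => apply_mem_orbitOf hg hv)
    fun v hv => ⟨g⁻¹ v, apply_mem_orbitOf (inv_mem hg) hv, by simp⟩

lemma transOn_univ_of_forall_mem_orbitOf (h : ∀ v, v ∈ orbitOf H γ) : TransOn H Set.univ := by
  intro x _ y _
  obtain ⟨g, hg, rfl⟩ := h x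
  obtain ⟨k, hk, rfl⟩ := h y
  exact ⟨k * g⁻¹, mul_mem hk (inv_mem hg), by simp⟩

lemma mem_of_apply_mem_orbitOf (hle : H ≤ G) (hs : stabOf G δ ≤ H) (hg : g ∈ G)
    (h : g δ ∈ orbitOf H δ) : g ∈ H := by
  obtain ⟨k, hk, hkδ⟩ := h
  have hstab : k⁻¹ * g ∈ stabOf G δ :=
    mem_stabOf.2 ⟨mul_mem (inv_mem (hle hk)) hg, by simp [← hkδ]⟩
  simpa using mul_mem hk (hs hstab)

lemma TransOn.image_of_conj (hKL : ∀ k ∈ K, g * k * g⁻¹ ∈ L) (h : TransOn K S) :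
    TransOn L (⇑g '' S) := by
  rintro _ ⟨x, hx, rfl⟩ _ ⟨y, hy, rfl⟩
  obtain ⟨k, hk, rfl⟩ := h x hx y hy
  exact ⟨g * k * g⁻¹, hKL k hk, by simp⟩

lemma PrimOn.image_of_conj (hKL : ∀ k ∈ K, g * k * g⁻¹ ∈ L) (h : PrimOn K S) :
    PrimOn L (⇑g '' S) := by
  refine ⟨h.1.image_of_conj hKL, fun B hB => ?_⟩
  have hgB : ⇑g '' (⇑g⁻¹ '' B) = B := by simp [Set.image_image]
  have hblock : IsBlockOn K S (⇑g⁻¹ '' B) := by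
    refine ⟨?_, fun k hk => ?_⟩
    · rintro _ ⟨b, hb, rfl⟩
      obtain ⟨x, hx, rfl⟩ := hB.1 hb
      simpa
    · have hconj : ⇑k '' (⇑g⁻¹ '' B) = ⇑g⁻¹ '' (⇑(g * k * g⁻¹) '' B) := by
        simp [Set.image_image]
      rw [hconj]
      rcases hB.2 _ (hKL k hk) with h | h
      · exact Or.inl (by rw [h])
      · exact Or.inr (Set.disjoint_image_of_injective g⁻¹.injective h)
  rcases h.2 _ hblock with h | h
  · exact Or.inl (hgB ▸ h.image _)
  · exact Or.inr (by rw [← hgB, h])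

end PermutationGroups

section Graphs

open Pointwise

variable {V : Type*} {Γ : SimpleGraph V} {G Gstar : Subgroup (Equiv.Perm V)} {g : Equiv.Perm V}
  {S U W U' W' A B : Set V} {α β γ δ ε v w : V}

lemma SimpleGraph.Preconnected.mem_of_forall_adj (hconn : Γ.Preconnected)
    (hS : ∀ u v, Γ.Adj u v → u ∈ S → v ∈ S) {u : V} (hu : u ∈ S) (v : V) : v ∈ S := by
  obtain ⟨p⟩ := hconn u v
  induction p with
  | nil => exact hu
  | cons huw _ ih => exact ih (hS _ _ huw hu)

namespace IsAutGroup

lemma adj_iff (hG : IsAutGroup Γ G) (hg : g ∈ G) : Γ.Adj (g v) (g w) ↔ Γ.Adj v w :=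
  ⟨fun h => by simpa using hG g⁻¹ (inv_mem hg) _ _ h, hG g hg v w⟩

lemma image_neighborSet (hG : IsAutGroup Γ G) (hg : g ∈ G) (v : V) :
    ⇑g '' Γ.neighborSet v = Γ.neighborSet (g v) := by
  ext w
  obtain ⟨w, rfl⟩ := g.surjective w
  simp [hG.adj_iff hg]

lemma isBipartition_image (hG : IsAutGroup Γ G) (hg : g ∈ G) (h : IsBipartition Γ U W) :
    IsBipartition Γ (⇑g '' U) (⇑g '' W) := by
  refine ⟨fun v => ?_, fun a b hab => ?_⟩
  · obtain ⟨v, rfl⟩ := g.surjective v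
    simpa using h.1 v
  · obtain ⟨a, rfl⟩ := g.surjective a
    obtain ⟨b, rfl⟩ := g.surjective b
    simpa using h.2 a b ((hG.adj_iff hg).1 hab)

end IsAutGroup

lemma IsBipartition.eq_or_eq (hconn : Γ.Preconnected) (h : IsBipartition Γ U W)
    (h' : IsBipartition Γ U' W') : U' = U ∨ U' = W := by
  by_cases hsame : ∀ v, v ∈ U' ↔ v ∈ U
  · exact Or.inl (Set.ext hsame)
  obtain ⟨v₀, hv₀⟩ := not_forall.1 hsame
  have hdiff : ∀ v, ¬(v ∈ U' ↔ v ∈ U) := by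
    refine hconn.mem_of_forall_adj (S := {v | ¬(v ∈ U' ↔ v ∈ U)}) (fun a b hab ha => ?_) hv₀
    have := h.1 a; have := h.1 b; have := h'.1 a; have := h'.1 b
    have := h.2 a b hab; have := h'.2 a b hab
    change ¬(a ∈ U' ↔ a ∈ U) at ha
    change ¬(b ∈ U' ↔ b ∈ U)
    tauto
  exact Or.inr (Set.ext fun v => by have := h.1 v; have := hdiff v; tauto)

lemma IsBipartition.image_eq_of_mem_stabOf (hconn : Γ.Preconnected) (hG : IsAutGroup Γ G)
    (h : IsBipartition Γ U W) (hg : g ∈ stabOf G δ) : ⇑g '' U = U := by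
  obtain ⟨hgG, hgδ⟩ := mem_stabOf.1 hg
  refine (h.eq_or_eq hconn (hG.isBipartition_image hgG h)).resolve_right fun hUW => ?_
  have hδ : δ ∈ U ↔ δ ∈ W := by
    rw [← hUW, ← g.injective.mem_set_image, hgδ]
  have := h.1 δ
  tauto

lemma IsBipartition.notMem_orbitOf_sup (hconn : Γ.Preconnected) (hG : IsAutGroup Γ G)
    (h : IsBipartition Γ U W) (hadj : Γ.Adj α β) :
    β ∉ orbitOf (stabOf G α ⊔ stabOf G β) α := by
  have hpres : stabOf G α ⊔ stabOf G β ≤ MulAction.stabilizer (Equiv.Perm V) U :=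
    sup_le (fun _ hg => h.image_eq_of_mem_stabOf hconn hG hg)
      (fun _ hg => h.image_eq_of_mem_stabOf hconn hG hg)
  rintro ⟨g, hg, rfl⟩
  have hα : α ∈ U ↔ g α ∈ U := by
    conv_rhs => rw [← (MulAction.mem_stabilizer_iff.1 (hpres hg) : ⇑g '' U = U)]
    exact g.injective.mem_set_image.symm
  have := h.1 α; have := h.1 (g α); have := h.2 α (g α) hadj
  tauto

lemma isBipartition_of_adj (hAB : ∀ v w, Γ.Adj v w → v ∈ A → w ∈ B)
    (hBA : ∀ v w, Γ.Adj v w → v ∈ B → w ∈ A) (hcover : ∀ v, v ∈ A ∨ v ∈ B)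
    (hdisj : Disjoint A B) : IsBipartition Γ A B := by
  refine ⟨fun v => ⟨fun hA hB => Set.disjoint_left.1 hdisj hA hB, (hcover v).resolve_right⟩,
    fun v w hvw => ?_⟩
  rcases hcover v with hv | hv
  exacts [Or.inl ⟨hv, hAB v w hvw hv⟩, Or.inr ⟨hv, hBA v w hvw hv⟩]

namespace IsAutGroup

lemma mem_orbitOf_of_adj (hG : IsAutGroup Γ G) (hle : Gstar ≤ G) (hs : stabOf G δ ≤ Gstar)
    (ht : TransOn (stabOf G δ) (Γ.neighborSet δ)) (hδε : Γ.Adj δ ε) (hvw : Γ.Adj v w)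
    (hv : v ∈ orbitOf Gstar δ) : w ∈ orbitOf Gstar ε := by
  obtain ⟨g, hg, rfl⟩ := hv
  have hw : g⁻¹ w ∈ Γ.neighborSet δ := by
    simpa using (hG.adj_iff (inv_mem (hle hg))).2 hvw
  obtain ⟨k, hk, hkε⟩ := ht ε hδε _ hw
  exact ⟨g * k, mul_mem hg (hs hk), by simp [hkε]⟩

lemma exists_conj_of_mem_orbitOf (hG : IsAutGroup Γ G) (hle : Gstar ≤ G)
    (hs : stabOf G δ ≤ Gstar) (hγ : γ ∈ orbitOf Gstar δ) :
    ∃ g : Equiv.Perm V, (∀ k ∈ stabOf G δ, g * k * g⁻¹ ∈ stabOf Gstar γ) ∧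
      ⇑g '' Γ.neighborSet δ = Γ.neighborSet γ := by
  obtain ⟨g, hg, rfl⟩ := hγ
  refine ⟨g, fun k hk => mul_mul_inv_mem_stabOf hg ?_, hG.image_neighborSet (hle hg) δ⟩
  rwa [stabOf_eq_of_le hle hs]

lemma transOn_of_mem_orbitOf (hG : IsAutGroup Γ G) (hle : Gstar ≤ G)
    (hs : stabOf G δ ≤ Gstar) (hγ : γ ∈ orbitOf Gstar δ)
    (ht : TransOn (stabOf G δ) (Γ.neighborSet δ)) :
    TransOn (stabOf Gstar γ) (Γ.neighborSet γ) := by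
  obtain ⟨g, hconj, himage⟩ := hG.exists_conj_of_mem_orbitOf hle hs hγ
  exact himage ▸ ht.image_of_conj hconj

lemma primOn_of_mem_orbitOf (hG : IsAutGroup Γ G) (hle : Gstar ≤ G)
    (hs : stabOf G δ ≤ Gstar) (hγ : γ ∈ orbitOf Gstar δ)
    (hp : PrimOn (stabOf G δ) (Γ.neighborSet δ)) :
    PrimOn (stabOf Gstar γ) (Γ.neighborSet γ) := by
  obtain ⟨g, hconj, himage⟩ := hG.exists_conj_of_mem_orbitOf hle hs hγ
  exact himage ▸ hp.image_of_conj hconj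

end IsAutGroup

lemma subgroupOf_eq_stabilizer_orbitOf (hle : Gstar ≤ G) (hs : stabOf G α ≤ Gstar) :
    Gstar.subgroupOf G = MulAction.stabilizer G (orbitOf Gstar α) := by
  ext ⟨g, hg⟩
  rw [Subgroup.mem_subgroupOf, MulAction.mem_stabilizer_iff]
  change g ∈ Gstar ↔ ⇑g '' orbitOf Gstar α = orbitOf Gstar α
  refine ⟨image_orbitOf, fun h => mem_of_apply_mem_orbitOf hle hs hg ?_⟩
  exact h ▸ Set.mem_image_of_mem g (mem_orbitOf_self Gstar α)

lemma relIndex_eq_ncard_orbit (hle : Gstar ≤ G) (hs : stabOf G α ≤ Gstar) :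
    Gstar.relIndex G = (MulAction.orbit G (orbitOf Gstar α)).ncard := by
  rw [Subgroup.relIndex, subgroupOf_eq_stabilizer_orbitOf hle hs, MulAction.index_stabilizer]

lemma IsBipartition.orbit_subset (hconn : Γ.Preconnected) (hG : IsAutGroup Γ G)
    (h : IsBipartition Γ U W) : MulAction.orbit G U ⊆ {U, W} := by
  rintro _ ⟨g, rfl⟩
  exact h.eq_or_eq hconn (hG.isBipartition_image g.2 h)

lemma relIndex_le_two (hconn : Γ.Preconnected) (hG : IsAutGroup Γ G) (hle : Gstar ≤ G)
    (hs : stabOf G α ≤ Gstar) (h : IsBipartition Γ (orbitOf Gstar α) W) :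
    Gstar.relIndex G ≤ 2 := by
  rw [relIndex_eq_ncard_orbit hle hs]
  calc _ ≤ ({orbitOf Gstar α, W} : Set (Set V)).ncard :=
        Set.ncard_le_ncard (h.orbit_subset hconn hG)
    _ ≤ ({W} : Set (Set V)).ncard + 1 := Set.ncard_insert_le _ _
    _ = 2 := by rw [Set.ncard_singleton]

lemma relIndex_eq_two_iff_exists_image_eq (hconn : Γ.Preconnected) (hG : IsAutGroup Γ G)
    (hle : Gstar ≤ G) (hs : stabOf G α ≤ Gstar)
    (h : IsBipartition Γ (orbitOf Gstar α) (orbitOf Gstar β)) :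
    Gstar.relIndex G = 2 ↔ ∃ g ∈ G, ⇑g '' orbitOf Gstar α = orbitOf Gstar β := by
  have hne : orbitOf Gstar α ≠ orbitOf Gstar β := fun he =>
    (h.1 α).1 (mem_orbitOf_self Gstar α) (he ▸ mem_orbitOf_self Gstar α)
  have hsub := h.orbit_subset hconn hG
  rw [relIndex_eq_ncard_orbit hle hs]
  constructor
  · intro h2
    have hpair := Set.eq_of_subset_of_ncard_le hsub (by rw [Set.ncard_pair hne, h2])
    obtain ⟨⟨g, hg⟩, hgβ⟩ : orbitOf Gstar β ∈ MulAction.orbit G (orbitOf Gstar α) := by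
      rw [hpair]
      exact Set.mem_insert_of_mem _ rfl
    exact ⟨g, hg, hgβ⟩
  · rintro ⟨g, hg, hgβ⟩
    have hpair : MulAction.orbit G (orbitOf Gstar α) = {orbitOf Gstar α, orbitOf Gstar β} :=
      hsub.antisymm (Set.insert_subset_iff.2
        ⟨MulAction.mem_orbit_self _, Set.singleton_subset_iff.2 ⟨⟨g, hg⟩, hgβ⟩⟩)
    rw [hpair, Set.ncard_pair hne]

lemma exists_image_eq_iff_transOn (hconn : Γ.Preconnected) (hG : IsAutGroup Γ G)
    (hle : Gstar ≤ G) (h : IsBipartition Γ (orbitOf Gstar α) (orbitOf Gstar β)) :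
    (∃ g ∈ G, ⇑g '' orbitOf Gstar α = orbitOf Gstar β) ↔ TransOn G Set.univ := by
  constructor
  · rintro ⟨g, hg, hgβ⟩
    obtain ⟨k, hk, hkβ⟩ : g α ∈ orbitOf Gstar β :=
      hgβ ▸ Set.mem_image_of_mem g (mem_orbitOf_self Gstar α)
    have hβ : β ∈ orbitOf G α := ⟨k⁻¹ * g, mul_mem (inv_mem (hle hk)) hg, by simp [← hkβ]⟩
    refine transOn_univ_of_forall_mem_orbitOf (γ := α) fun v => ?_
    by_cases hv : v ∈ orbitOf Gstar β
    · exact orbitOf_eq_of_mem hβ ▸ orbitOf_mono hle hv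
    · exact orbitOf_mono hle ((h.1 v).2 hv)
  · intro ht
    obtain ⟨g, hg, hgαβ⟩ := ht α trivial β trivial
    refine ⟨g, hg, (h.eq_or_eq hconn (hG.isBipartition_image hg h)).resolve_left fun he => ?_⟩
    have hβ : β ∈ orbitOf Gstar α := he ▸ hgαβ ▸ Set.mem_image_of_mem g (mem_orbitOf_self Gstar α)
    exact (h.1 β).1 hβ (mem_orbitOf_self Gstar β)

end Graphs

theorem stmt_3_general {V : Type*} (Γ : SimpleGraph V) (G Gstar : Subgroup (Equiv.Perm V))
    (α β : V)
    (hconn : Γ.Connected) (hadj : Γ.Adj α β) (hG : IsAutGroup Γ G)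
    (hGstar : Gstar = stabOf G α ⊔ stabOf G β)
    (htα : TransOn (stabOf G α) (Γ.neighborSet α))
    (htβ : TransOn (stabOf G β) (Γ.neighborSet β)) :
    (∀ γ : V, TransOn (stabOf Gstar γ) (Γ.neighborSet γ)) ∧
    ((∀ γ : V, PrimOn (stabOf Gstar γ) (Γ.neighborSet γ)) ↔
      (PrimOn (stabOf G α) (Γ.neighborSet α) ∧ PrimOn (stabOf G β) (Γ.neighborSet β))) ∧
    (((¬ ∃ U W : Set V, IsBipartition Γ U W) ∧ G = Gstar ∧ TransOn G Set.univ) ∨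
      (IsBipartition Γ (orbitOf Gstar α) (orbitOf Gstar β) ∧
        Subgroup.relIndex Gstar G ≤ 2 ∧
        (Subgroup.relIndex Gstar G = 2 ↔ TransOn G Set.univ))) := by
  have hle : Gstar ≤ G := hGstar ▸ sup_le inf_le_left inf_le_left
  have hsα : stabOf G α ≤ Gstar := hGstar ▸ le_sup_left
  have hsβ : stabOf G β ≤ Gstar := hGstar ▸ le_sup_right
  have stepα : ∀ v w, Γ.Adj v w → v ∈ orbitOf Gstar α → w ∈ orbitOf Gstar β :=
    fun _ _ => hG.mem_orbitOf_of_adj hle hsα htα hadj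
  have stepβ : ∀ v w, Γ.Adj v w → v ∈ orbitOf Gstar β → w ∈ orbitOf Gstar α :=
    fun _ _ => hG.mem_orbitOf_of_adj hle hsβ htβ hadj.symm
  have hcover : ∀ v, v ∈ orbitOf Gstar α ∨ v ∈ orbitOf Gstar β :=
    hconn.preconnected.mem_of_forall_adj (S := orbitOf Gstar α ∪ orbitOf Gstar β)
      (fun v w hvw hv => (hv.imp (stepα v w hvw) (stepβ v w hvw)).symm)
      (.inl (mem_orbitOf_self Gstar α))
  refine ⟨fun γ => ?_, ⟨fun hp => ?_, fun ⟨hpα, hpβ⟩ γ => ?_⟩, ?_⟩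
  · rcases hcover γ with hγ | hγ
    exacts [hG.transOn_of_mem_orbitOf hle hsα hγ htα, hG.transOn_of_mem_orbitOf hle hsβ hγ htβ]
  · exact ⟨stabOf_eq_of_le hle hsα ▸ hp α, stabOf_eq_of_le hle hsβ ▸ hp β⟩
  · rcases hcover γ with hγ | hγ
    exacts [hG.primOn_of_mem_orbitOf hle hsα hγ hpα, hG.primOn_of_mem_orbitOf hle hsβ hγ hpβ]
  by_cases hβ : β ∈ orbitOf Gstar α
  · have hall : ∀ v, v ∈ orbitOf Gstar α := fun v =>
      (hcover v).elim id fun hv => orbitOf_eq_of_mem hβ ▸ hv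
    refine .inl ⟨fun ⟨U, W, h⟩ => h.notMem_orbitOf_sup hconn.preconnected hG hadj (hGstar ▸ hβ),
      le_antisymm (fun g hg => mem_of_apply_mem_orbitOf hle hsα hg (hall _)) hle,
      transOn_univ_of_forall_mem_orbitOf fun v => orbitOf_mono hle (hall v)⟩
  · have hbip := isBipartition_of_adj stepα stepβ hcover (disjoint_orbitOf hβ)
    exact .inr ⟨hbip, relIndex_le_two hconn.preconnected hG hle hsα hbip,
      (relIndex_eq_two_iff_exists_image_eq hconn.preconnected hG hle hsα hbip).trans
        (exists_image_eq_iff_transOn hconn.preconnected hG hle hbip)⟩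

/-- **Lemma 2.1 (tech-1).** For a finite connected graph `Γ`, an edge `{α,β}`, a group
`G ≤ Aut Γ` whose stabilizers `G_α`, `G_β` act transitively on the respective neighbourhoods,
and `G* = ⟨G_α, G_β⟩`: (a) `Γ` is `G*`-locally arc-transitive; (b) `Γ` is `G*`-locally
primitive iff `G_α`, `G_β` act primitively on `Γ(α)`, `Γ(β)`; (c) either `Γ` is not
bipartite, `G = G*` and `G` is transitive on `V`, or `Γ` is bipartite with parts the two
`G*`-orbits, and `|G : G*| ≤ 2` with equality iff `G` is transitive on `V`. -/
theorem stmt_3 {V : Type*} [Finite V] (Γ : SimpleGraph V) (G Gstar : Subgroup (Equiv.Perm V))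
    (α β : V)
    (hconn : Γ.Connected) (hadj : Γ.Adj α β) (hG : IsAutGroup Γ G)
    (hGstar : Gstar = stabOf G α ⊔ stabOf G β)
    (htα : TransOn (stabOf G α) (Γ.neighborSet α))
    (htβ : TransOn (stabOf G β) (Γ.neighborSet β)) :
    (∀ γ : V, TransOn (stabOf Gstar γ) (Γ.neighborSet γ)) ∧
    ((∀ γ : V, PrimOn (stabOf Gstar γ) (Γ.neighborSet γ)) ↔
      (PrimOn (stabOf G α) (Γ.neighborSet α) ∧ PrimOn (stabOf G β) (Γ.neighborSet β))) ∧
    (((¬ ∃ U W : Set V, IsBipartition Γ U W) ∧ G = Gstar ∧ TransOn G Set.univ) ∨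
      (IsBipartition Γ (orbitOf Gstar α) (orbitOf Gstar β) ∧
        Subgroup.relIndex Gstar G ≤ 2 ∧
        (Subgroup.relIndex Gstar G = 2 ↔ TransOn G Set.univ))) :=
  stmt_3_general Γ G Gstar α β hconn hadj hG hGstar htα htβ
end

section
/- Under the PA setup, for every i with 1 ≤ i ≤ n, the subgroup N_i = ∏_{j≠i} T_j is intransitive on each orbit of M on V; that is, for every vertex γ ∈ V, N_i does not act transitively on the M-orbit of γ. -/
def NormalIn {W : Type*} [Group W] (N H : Subgroup W) : Prop :=
  N ≤ H ∧ ∀ h ∈ H, ∀ x ∈ N, h * x * h⁻¹ ∈ N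

def TwoArcTrans {V : Type*} (Γ : SimpleGraph V) (G : Subgroup (Equiv.Perm V)) : Prop :=
  ∀ a b c a' b' c' : V, Γ.Adj a b → Γ.Adj b c → a ≠ c →
    Γ.Adj a' b' → Γ.Adj b' c' → a' ≠ c' →
    ∃ g ∈ G, g a = a' ∧ g b = b' ∧ g c = c'

/-- The ordered product of one element from each of the subgroups `T i`. -/
def prodOf {W : Type*} [Group W] {n : ℕ} (T : Fin n → Subgroup W)
    (f : (i : Fin n) → ↥(T i)) : W :=
  (List.ofFn fun i => ((f i : W))).prod

theorem IsSimpleGroup.center_eq_bot {G : Type*} [Group G] [IsSimpleGroup G]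
    (h : ∃ x y : G, x * y ≠ y * x) : Subgroup.center G = ⊥ := by
  refine (Subgroup.center G).normal_of_characteristic.eq_bot_or_eq_top.resolve_right fun htop => ?_
  obtain ⟨x, y, hxy⟩ := h
  exact hxy (Subgroup.mem_center_iff.mp (htop ▸ Subgroup.mem_top y) x)

namespace Pi

variable {ι : Type*} [DecidableEq ι] {G : ι → Type*} [∀ i, Group (G i)]

theorem normal_range_mulSingle (i : ι) : (MonoidHom.mulSingle G i).range.Normal where
  conj_mem := by
    rintro _ ⟨x, rfl⟩ g
    refine ⟨g i * x * (g i)⁻¹, funext fun j => ?_⟩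
    by_cases hj : j = i
    · subst hj; simp
    · simp [Pi.mulSingle_eq_of_ne hj]

theorem exists_le_ker_evalMonoidHom_of_le_centralizer [∀ i, IsSimpleGroup (G i)]
    (hG : ∀ i, ∃ x y : G i, x * y ≠ y * x) {S H : Subgroup (∀ i, G i)} [hSn : S.Normal]
    (hS : S ≠ ⊥) (hH : H ≤ Subgroup.centralizer S) :
    ∃ k, H ≤ (Pi.evalMonoidHom G k).ker := by
  obtain ⟨s, hsS, hs⟩ := S.bot_or_exists_ne_one.resolve_left hS
  obtain ⟨k, hk⟩ : ∃ k, s k ≠ 1 := by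
    by_contra! h
    exact hs (funext h)
  have hsurj : Function.Surjective (Pi.evalMonoidHom G k) := fun x => ⟨Pi.mulSingle k x, by simp⟩
  have htop : S.map (Pi.evalMonoidHom G k) = ⊤ := by
    refine (hSn.map _ hsurj).eq_bot_or_eq_top.resolve_left fun hbot => hk ?_
    exact (Subgroup.mem_bot).mp (hbot ▸ Subgroup.mem_map_of_mem _ hsS)
  refine ⟨k, fun h hh => ?_⟩
  have hcenter : h k ∈ Subgroup.center (G k) := by
    refine Subgroup.mem_center_iff.mpr fun y => ?_
    obtain ⟨t, htS, rfl⟩ := htop ▸ Subgroup.mem_top y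
    exact congrFun (Subgroup.mem_centralizer_iff.mp (hH hh) t htS) k
  simpa [IsSimpleGroup.center_eq_bot (hG k)] using hcenter

theorem _root_.MulEquiv.exists_map_ker_evalMonoidHom_le [∀ i, IsSimpleGroup (G i)]
    (hG : ∀ i, ∃ x y : G i, x * y ≠ y * x) (θ : (∀ i, G i) ≃* (∀ i, G i)) (i : ι) :
    ∃ k, (Pi.evalMonoidHom G i).ker.map θ.toMonoidHom ≤ (Pi.evalMonoidHom G k).ker := by
  have := (normal_range_mulSingle (G := G) i).map θ.toMonoidHom θ.surjective
  refine exists_le_ker_evalMonoidHom_of_le_centralizer hG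
    (S := (MonoidHom.mulSingle G i).range.map θ.toMonoidHom) ?_ ?_
  · obtain ⟨x, hx⟩ := exists_ne (1 : G i)
    rw [Ne, Subgroup.map_eq_bot_iff_of_injective _ θ.injective, eq_bot_iff]
    intro h
    exact hx (by simpa using congrFun (Subgroup.mem_bot.mp (h ⟨x, rfl⟩)) i)
  · rintro _ ⟨f, hf : f i = 1, rfl⟩ _ ⟨_, ⟨x, rfl⟩, rfl⟩
    simp only [MulEquiv.coe_toMonoidHom, ← map_mul]
    congr 1
    funext j
    by_cases hj : j = i
    · subst hj; simp [hf]
    · simp [Pi.mulSingle_eq_of_ne hj]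

end Pi

theorem MonoidHom.exists_mulEquiv_apply_eq_conj {P W : Type*} [Group P] [Group W] (Φ : P →* W)
    (hΦ : Function.Injective Φ) (g : W)
    (hg : Φ.range.map (MulAut.conj g).toMonoidHom = Φ.range) :
    ∃ θ : P ≃* P, ∀ f, Φ (θ f) = g * Φ f * g⁻¹ := by
  let e := MonoidHom.ofInjective hΦ
  let c := ((MulAut.conj g).subgroupMap Φ.range).trans (MulEquiv.subgroupCongr hg)
  refine ⟨e.trans (c.trans e.symm), fun f => ?_⟩
  change Φ (e.symm (c (e f))) = _
  rw [← MonoidHom.ofInjective_apply hΦ, MulEquiv.apply_symm_apply]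
  rfl

theorem Subgroup.map_conj_map_eq_map_map {P W : Type*} [Group P] [Group W] {Φ : P →* W}
    {θ : P ≃* P} {g : W} (hθ : ∀ f, Φ (θ f) = g * Φ f * g⁻¹) (K : Subgroup P) :
    (K.map Φ).map (MulAut.conj g).toMonoidHom = (K.map θ.toMonoidHom).map Φ := by
  rw [Subgroup.map_map, Subgroup.map_map]
  exact congrArg K.map (MonoidHom.ext fun f => (hθ f).symm)

theorem NormalIn.map_conj_eq {W : Type*} [Group W] {N H : Subgroup W} (h : NormalIn N H)
    {g : W} (hg : g ∈ H) : N.map (MulAut.conj g).toMonoidHom = N := by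
  refine le_antisymm ?_ fun x hx => ⟨g⁻¹ * x * g, ?_, ?_⟩
  · rintro _ ⟨x, hx, rfl⟩
    exact h.2 g hg x hx
  · simpa using h.2 g⁻¹ (inv_mem hg) x hx
  · simp [MulAut.conj_apply, mul_assoc]

section

variable {V : Type*}

theorem TransOn.mono {H K : Subgroup (Equiv.Perm V)} {S : Set V} (h : TransOn H S) (hHK : H ≤ K) :
    TransOn K S := fun x hx y hy =>
  let ⟨g, hg, hgx⟩ := h x hx y hy
  ⟨g, hHK hg, hgx⟩

theorem TransOn.map_conj {H M : Subgroup (Equiv.Perm V)} {γ : V} (h : TransOn H (orbitOf M γ))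
    {g : Equiv.Perm V} (hg : M.map (MulAut.conj g).toMonoidHom = M) :
    TransOn (H.map (MulAut.conj g).toMonoidHom) (orbitOf M (g γ)) := by
  have hconj : ∀ m ∈ M, ∃ m' ∈ M, m (g γ) = g (m' γ) := by
    intro m hm
    obtain ⟨m', hm', rfl⟩ := hg.symm ▸ hm
    exact ⟨m', hm', by simp [MulAut.conj_apply]⟩
  rintro _ ⟨m₁, hm₁, rfl⟩ _ ⟨m₂, hm₂, rfl⟩
  obtain ⟨m₁', hm₁', h₁⟩ := hconj m₁ hm₁
  obtain ⟨m₂', hm₂', h₂⟩ := hconj m₂ hm₂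
  obtain ⟨u, hu, hux⟩ := h _ ⟨m₁', hm₁', rfl⟩ _ ⟨m₂', hm₂', rfl⟩
  exact ⟨_, Subgroup.mem_map_of_mem _ hu, by simp [MulAut.conj_apply, h₁, h₂, hux]⟩

theorem SimpleGraph.exists_adj_ne {Γ : SimpleGraph V} {u : V} (hu : 2 ≤ (Γ.neighborSet u).ncard)
    (v : V) : ∃ c, Γ.Adj u c ∧ c ≠ v := by
  by_contra! h
  have := Set.ncard_le_ncard (fun c hc => h c hc : Γ.neighborSet u ⊆ {v}) (Set.finite_singleton v)
  have h1 : (Γ.neighborSet u).ncard ≤ 1 := this.trans_eq (Set.ncard_singleton v)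
  omega

theorem TwoArcTrans.exists_apply_eq_of_reachable {Γ : SimpleGraph V} {G : Subgroup (Equiv.Perm V)}
    (h2arc : TwoArcTrans Γ G) (hval : ∀ γ, 2 ≤ (Γ.neighborSet γ).ncard) {u v : V}
    (huv : Γ.Reachable u v) : ∃ g ∈ G, g u = v := by
  obtain ⟨w⟩ := huv
  induction w with
  | nil => exact ⟨1, one_mem G, rfl⟩
  | @cons u w v huw _ ih =>
    obtain ⟨g, hg, hgw⟩ := ih
    obtain ⟨c, hwc, hcu⟩ := SimpleGraph.exists_adj_ne (hval w) u
    obtain ⟨d, hud, hdw⟩ := SimpleGraph.exists_adj_ne (hval u) w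
    obtain ⟨g', hg', hg'u, -, -⟩ := h2arc u w c w u d huw hwc hcu.symm huw.symm hud hdw.symm
    exact ⟨g * g', mul_mem hg hg', by simp [hg'u, hgw]⟩

end

section Factorization

variable {W : Type*} [Group W] {n : ℕ} {T : Fin n → Subgroup W}
  (hcomm : Pairwise fun i j => ∀ x y : W, x ∈ T i → y ∈ T j → Commute x y)

theorem prodOf_eq_noncommPiCoprod (f : ∀ i, T i) :
    prodOf T f = Subgroup.noncommPiCoprod hcomm f := by
  simp [prodOf, Subgroup.noncommPiCoprod, MonoidHom.noncommPiCoprod, Finset.noncommProd]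

theorem iSup_ne_le_map_ker_evalMonoidHom (i : Fin n) :
    ⨆ j ∈ ({j | j ≠ i} : Set (Fin n)), T j ≤
      (Pi.evalMonoidHom (fun j => T j) i).ker.map (Subgroup.noncommPiCoprod hcomm) := by
  refine iSup₂_le fun j hj t ht => ⟨Pi.mulSingle j ⟨t, ht⟩, ?_, by simp⟩
  simp [MonoidHom.mem_ker, Pi.mulSingle_eq_of_ne (Ne.symm hj)]

end Factorization

theorem le_of_transOn_map_ker_evalMonoidHom {V : Type*} {n : ℕ}
    {T : Fin n → Subgroup (Equiv.Perm V)}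
    {hcomm : Pairwise fun i j => ∀ x y, x ∈ T i → y ∈ T j → Commute x y}
    {M R : Subgroup (Equiv.Perm V)} {α : V} {k : Fin n}
    (hM : (Subgroup.noncommPiCoprod hcomm).range ≤ M)
    (hMα : ∀ f, Subgroup.noncommPiCoprod hcomm f ∈ stabOf M α → (f k : Equiv.Perm V) ∈ R)
    (htrans : TransOn ((Pi.evalMonoidHom (fun j => T j) k).ker.map
      (Subgroup.noncommPiCoprod hcomm)) (orbitOf M α)) :
    T k ≤ R := by
  intro t ht
  have htM : t ∈ M := hM ⟨Pi.mulSingle k ⟨t, ht⟩, by simp⟩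
  obtain ⟨_, ⟨f, hfk : f k = 1, rfl⟩, hf⟩ := htrans α ⟨1, one_mem M, rfl⟩ (t α) ⟨t, htM, rfl⟩
  have hstab : Subgroup.noncommPiCoprod hcomm (f⁻¹ * Pi.mulSingle k ⟨t, ht⟩) ∈ stabOf M α := by
    refine ⟨hM ⟨_, rfl⟩, ?_⟩
    simp [MulAction.mem_stabilizer_iff, Equiv.Perm.mul_apply, ← hf]
  simpa [hfk] using hMα _ hstab

theorem stmt_8_general
    {V : Type*} (Γ : SimpleGraph V)
    (G M : Subgroup (Equiv.Perm V)) (α : V)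
    (n : ℕ) (T R : Fin n → Subgroup (Equiv.Perm V))
    (hconn : Γ.Connected)
    (hval : ∀ γ : V, 3 ≤ (Γ.neighborSet γ).ncard)
    (h2arc : TwoArcTrans Γ G)
    (hMG : NormalIn M G)
    (hTsimple : ∀ i, IsSimpleGroup ↥(T i))
    (hTnonab : ∀ i, ∃ x ∈ T i, ∃ y ∈ T i, x * y ≠ y * x)
    (hTM : ∀ i, T i ≤ M)
    (hTcomm : ∀ i j, i ≠ j → ∀ x ∈ T i, ∀ y ∈ T j, x * y = y * x)
    (hfact : ∀ m ∈ M, ∃! f : (i : Fin n) → ↥(T i), m = prodOf T f)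
    (hRle : ∀ i, R i ≤ T i) (hRne : ∀ i, R i ≠ T i)
    (hMα : ∀ m ∈ stabOf M α, ∀ f : (i : Fin n) → ↥(T i),
      m = prodOf T f → ∀ i, ((f i : Equiv.Perm V)) ∈ R i)
    :
    ∀ i : Fin n, ∀ γ : V, ¬ TransOn (⨆ j ∈ ({j | j ≠ i} : Set (Fin n)), T j) (orbitOf M γ) := by
  intro i γ htrans
  have hcomm : Pairwise fun i j => ∀ x y, x ∈ T i → y ∈ T j → Commute x y :=
    fun i j hij x y hx hy => hTcomm i j hij x hx y hy
  set Φ := Subgroup.noncommPiCoprod hcomm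
  simp only [prodOf_eq_noncommPiCoprod hcomm] at hfact hMα
  have hrange : Φ.range = M := by
    refine le_antisymm ?_ fun m hm => ⟨_, (hfact m hm).exists.choose_spec.symm⟩
    rw [Subgroup.noncommPiCoprod_range]
    exact iSup_le hTM
  have hinj : Function.Injective Φ := fun f f' h => (hfact _ (hrange ▸ ⟨f, rfl⟩)).unique rfl h
  obtain ⟨g, hgG, rfl⟩ := h2arc.exists_apply_eq_of_reachable
    (fun γ => (hval γ).trans' (by norm_num)) (hconn.preconnected γ α)
  have hgM := hMG.map_conj_eq hgG
  obtain ⟨θ, hθ⟩ := Φ.exists_mulEquiv_apply_eq_conj hinj g (hrange ▸ hgM)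
  have hnonab : ∀ i, ∃ x y : T i, x * y ≠ y * x := fun i =>
    let ⟨x, hx, y, hy, hxy⟩ := hTnonab i
    ⟨⟨x, hx⟩, ⟨y, hy⟩, fun h => hxy (congrArg Subtype.val h)⟩
  obtain ⟨k, hk⟩ := θ.exists_map_ker_evalMonoidHom_le hnonab i
  refine hRne k (le_antisymm (hRle k) (le_of_transOn_map_ker_evalMonoidHom hrange.le
    (fun f hf => hMα _ hf f rfl k) ((htrans.map_conj hgM).mono ?_)))
  calc _ ≤ ((Pi.evalMonoidHom _ i).ker.map Φ).map (MulAut.conj g).toMonoidHom :=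
        Subgroup.map_mono (iSup_ne_le_map_ker_evalMonoidHom hcomm i)
    _ = _ := Subgroup.map_conj_map_eq_map_map hθ _
    _ ≤ _ := Subgroup.map_mono hk

/-- **Lemma 4.1 (ker-pi).** In the PA setup, each `N_i = ∏_{j ≠ i} T_j` is intransitive
on every `M`-orbit on `V`. -/
theorem stmt_8
    {V : Type*} [Finite V] (Γ : SimpleGraph V)
    (G Gstar M : Subgroup (Equiv.Perm V)) (α β : V)
    (n : ℕ) (T R : Fin n → Subgroup (Equiv.Perm V))
    (hconn : Γ.Connected)
    (hval : ∀ γ : V, 3 ≤ (Γ.neighborSet γ).ncard)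
    (hG : IsAutGroup Γ G)
    (h2arc : TwoArcTrans Γ G)
    (hadj : Γ.Adj α β)
    (hGstar : Gstar = stabOf G α ⊔ stabOf G β)
    (hMGstar : NormalIn M Gstar)
    (hMG : NormalIn M G)
    (hMbot : M ≠ ⊥)
    (hMuniq : ∀ N : Subgroup (Equiv.Perm V), NormalIn N Gstar → N ≠ ⊥ → M ≤ N)
    (hn : 2 ≤ n)
    (hTsimple : ∀ i, IsSimpleGroup ↥(T i))
    (hTnonab : ∀ i, ∃ x ∈ T i, ∃ y ∈ T i, x * y ≠ y * x)
    (hTiso : ∀ i j, Nonempty (↥(T i) ≃* ↥(T j)))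
    (hTM : ∀ i, T i ≤ M)
    (hTcomm : ∀ i j, i ≠ j → ∀ x ∈ T i, ∀ y ∈ T j, x * y = y * x)
    (hfact : ∀ m ∈ M, ∃! f : (i : Fin n) → ↥(T i), m = prodOf T f)
    (hRbot : ∀ i, R i ≠ ⊥) (hRle : ∀ i, R i ≤ T i) (hRne : ∀ i, R i ≠ T i)
    (horb : ∀ γ : V, orbitOf M γ = orbitOf Gstar γ)
    (hMα : ∀ m ∈ stabOf M α, ∀ f : (i : Fin n) → ↥(T i),
      m = prodOf T f → ∀ i, ((f i : Equiv.Perm V)) ∈ R i)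
    (hsurj : ∀ i, ∀ y ∈ R i, ∃ m ∈ stabOf M α, ∃ f : (i : Fin n) → ↥(T i),
      m = prodOf T f ∧ ((f i : Equiv.Perm V)) = y)
    :
    ∀ i : Fin n, ∀ γ : V, ¬ TransOn (⨆ j ∈ ({j | j ≠ i} : Set (Fin n)), T j) (orbitOf M γ) :=
  stmt_8_general Γ G M α n T R hconn hval h2arc hMG hTsimple hTnonab hTM hTcomm hfact hRle hRne hMα
end

section
/- Let C be an equidistant linear [n,2]_q code of weight ω. For a nonzero codeword w ∈ C, let C_w = {u ∈ C : u = 0 or supp(u) = supp(w)}. Then C_w is a 1-dimensional 𝔽_q-subspace of C, and every 1-dimensional subspace of C is equal to C_w for some nonzero w ∈ C. -/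
/-- The support of a vector. -/
def suppOf {F : Type*} [Zero F] {n : ℕ} (v : Fin n → F) : Set (Fin n) :=
  {i | v i ≠ 0}

theorem Submodule.exists_ne_zero_eq_span_singleton_of_finrank_eq_one {K V : Type*} [DivisionRing K]
    [AddCommGroup V] [Module K V] {D : Submodule K V} (hD : Module.finrank K D = 1) :
    ∃ w ∈ D, w ≠ 0 ∧ D = K ∙ w := by
  obtain ⟨⟨w, hwD⟩, hw0, hgen⟩ := finrank_eq_one_iff'.mp hD
  refine ⟨w, hwD, fun h => hw0 (Subtype.ext h), le_antisymm (fun u hu => ?_) ?_⟩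
  · obtain ⟨c, hc⟩ := hgen ⟨u, hu⟩
    exact Submodule.mem_span_singleton.mpr ⟨c, congrArg Subtype.val hc⟩
  · exact (Submodule.span_singleton_le_iff_mem w D).mpr hwD

section Support

variable {F : Type*} [DivisionRing F] {n : ℕ}

theorem suppOf_smul {c : F} (hc : c ≠ 0) (v : Fin n → F) : suppOf (c • v) = suppOf v := by
  ext i
  simp [suppOf, hc]

theorem suppOf_sub_div_smul_ssubset {u w : Fin n → F} (hsupp : suppOf u = suppOf w) {i : Fin n}
    (hi : w i ≠ 0) : suppOf (u - (u i / w i) • w) ⊂ suppOf w := by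
  refine ⟨fun j hj => ?_, fun hle => ?_⟩
  · by_contra hwj
    have huj : u j = 0 := by
      by_contra h
      exact hwj (hsupp ▸ h)
    simp_all [suppOf]
  · have := hle (show i ∈ suppOf w from hi)
    simp [suppOf, hi] at this

end Support

section Equidistant

variable {F : Type*} [DivisionRing F] {n : ℕ} {C : Submodule F (Fin n → F)} {ω : ℕ}

/-- Subtracting from `u` the multiple of `w` that cancels one coordinate leaves a codeword supported
strictly inside `suppOf w`; equidistance forces it to vanish. -/
theorem mem_span_singleton_of_suppOf_eq (hequi : ∀ v ∈ C, v ≠ 0 → (suppOf v).ncard = ω)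
    {u w : Fin n → F} (hu : u ∈ C) (hw : w ∈ C) (hw0 : w ≠ 0) (hsupp : suppOf u = suppOf w) :
    u ∈ F ∙ w := by
  obtain ⟨i, hi⟩ : ∃ i, w i ≠ 0 := Function.ne_iff.mp hw0
  have hss := suppOf_sub_div_smul_ssubset hsupp hi
  have hv0 : u - (u i / w i) • w = 0 := by
    by_contra hv0
    have hlt := Set.ncard_lt_ncard hss (Set.toFinite _)
    rw [hequi _ (C.sub_mem hu (C.smul_mem _ hw)) hv0, hequi w hw hw0] at hlt
    exact lt_irrefl _ hlt
  exact Submodule.mem_span_singleton.mpr ⟨u i / w i, (sub_eq_zero.mp hv0).symm⟩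

theorem coe_span_singleton_eq_setOf_suppOf_eq (hequi : ∀ v ∈ C, v ≠ 0 → (suppOf v).ncard = ω)
    {w : Fin n → F} (hw : w ∈ C) (hw0 : w ≠ 0) :
    ((F ∙ w) : Set (Fin n → F)) = {u | u ∈ C ∧ (u = 0 ∨ suppOf u = suppOf w)} := by
  ext u
  constructor
  · intro hu
    obtain ⟨c, rfl⟩ := Submodule.mem_span_singleton.mp hu
    refine ⟨C.smul_mem c hw, ?_⟩
    rcases eq_or_ne c 0 with rfl | hc
    · exact Or.inl (zero_smul F w)
    · exact Or.inr (suppOf_smul hc w)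
  · rintro ⟨hu, rfl | hsupp⟩
    · exact zero_mem _
    · exact mem_span_singleton_of_suppOf_eq hequi hu hw hw0 hsupp

end Equidistant

theorem stmt_11_general {F : Type*} [Field F] {n : ℕ}
    (C : Submodule F (Fin n → F)) (ω : ℕ)
    (hequi : ∀ v ∈ C, v ≠ 0 → (suppOf v).ncard = ω) :
    (∀ w ∈ C, w ≠ 0 →
      ∃ D : Submodule F (Fin n → F), D ≤ C ∧ Module.finrank F ↥D = 1 ∧
        (D : Set (Fin n → F)) = {u | u ∈ C ∧ (u = 0 ∨ suppOf u = suppOf w)}) ∧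
    (∀ D : Submodule F (Fin n → F), D ≤ C → Module.finrank F ↥D = 1 →
      ∃ w ∈ C, w ≠ 0 ∧
        (D : Set (Fin n → F)) = {u | u ∈ C ∧ (u = 0 ∨ suppOf u = suppOf w)}) := by
  constructor
  · intro w hw hw0
    exact ⟨F ∙ w, (Submodule.span_singleton_le_iff_mem w C).mpr hw, finrank_span_singleton hw0,
      coe_span_singleton_eq_setOf_suppOf_eq hequi hw hw0⟩
  · intro D hD hD1
    obtain ⟨w, hwD, hw0, rfl⟩ := Submodule.exists_ne_zero_eq_span_singleton_of_finrank_eq_one hD1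
    exact ⟨w, hD hwD, hw0, coe_span_singleton_eq_setOf_suppOf_eq hequi (hD hwD) hw0⟩

/-- **Section 5, discussion.** Let `C` be an equidistant linear `[n,2]_q` code of weight
`ω`. For a nonzero codeword `w`, `C_w = {u ∈ C : u = 0 or supp u = supp w}` is a
1-dimensional subspace of `C`, and every 1-dimensional subspace of `C` arises this way. -/
theorem stmt_11 {F : Type*} [Field F] [Fintype F] {n : ℕ}
    (C : Submodule F (Fin n → F)) (ω : ℕ)
    (hdim : Module.finrank F ↥C = 2)
    (hequi : ∀ v ∈ C, v ≠ 0 → (suppOf v).ncard = ω) :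
    (∀ w ∈ C, w ≠ 0 →
      ∃ D : Submodule F (Fin n → F), D ≤ C ∧ Module.finrank F ↥D = 1 ∧
        (D : Set (Fin n → F)) = {u | u ∈ C ∧ (u = 0 ∨ suppOf u = suppOf w)}) ∧
    (∀ D : Submodule F (Fin n → F), D ≤ C → Module.finrank F ↥D = 1 →
      ∃ w ∈ C, w ≠ 0 ∧
        (D : Set (Fin n → F)) = {u | u ∈ C ∧ (u = 0 ∨ suppOf u = suppOf w)}) :=
  stmt_11_general C ω hequi
end

section
/- Let q be a prime power, n = q + 1, and let C be an equidistant linear [n,2]_q code of weight ω. Then ω = n − 1 = q, and the kernels ker(π_i) of the n coordinate projections π_i : C → 𝔽_q, 1 ≤ i ≤ n, are n pairwise distinct 1-dimensional subspaces of C. -/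
set_option maxHeartbeats 1000000 in
/-- **Lemma 5.1 (eqid).** Let `C` be an equidistant linear `[n,2]_q` code of weight `ω`
with `n = q + 1`. Then `ω = n − 1 = q`, and the kernels `ker π_i`, `1 ≤ i ≤ n`, of the
coordinate projections are `n` pairwise distinct 1-dimensional subspaces of `C`. -/
theorem stmt_12 {F : Type*} [Field F] [Fintype F] (q n ω : ℕ)
    (hq : q = Fintype.card F) (hn : n = q + 1)
    (C : Submodule F (Fin n → F))
    (hdim : Module.finrank F ↥C = 2)
    (hequi : ∀ v ∈ C, v ≠ 0 → (suppOf v).ncard = ω) :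
    ω = q ∧
    (∀ i : Fin n,
      Module.finrank F
        ↥(LinearMap.ker ((LinearMap.proj i : (Fin n → F) →ₗ[F] F).comp C.subtype)) = 1) ∧
    Function.Injective
      (fun i : Fin n =>
        LinearMap.ker ((LinearMap.proj i : (Fin n → F) →ₗ[F] F).comp C.subtype)) := by
  classical
  have hq2 : 2 ≤ q := hq ▸ Fintype.one_lt_card
  set K : Fin n → Submodule F ↥C :=
    fun i => LinearMap.ker ((LinearMap.proj i : (Fin n → F) →ₗ[F] F).comp C.subtype) with hK
  -- weight as a Finset card
  have hwt : ∀ v : Fin n → F, v ∈ C → v ≠ 0 →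
      (Finset.univ.filter fun i => v i ≠ 0).card = ω := by
    intro v hv hv0
    have := hequi v hv hv0
    rwa [show suppOf v = {i | v i ≠ 0} from rfl, Set.ncard_eq_toFinset_card',
      Set.toFinset_setOf] at this
  -- finrank of kernels is 1 or 2
  haveI : FiniteDimensional F ↥C := FiniteDimensional.of_finrank_eq_succ hdim
  have hd12 : ∀ i, Module.finrank F ↥(K i) = 1 ∨ Module.finrank F ↥(K i) = 2 := by
    intro i
    have hrn := LinearMap.finrank_range_add_finrank_ker
      ((LinearMap.proj i : (Fin n → F) →ₗ[F] F).comp C.subtype)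
    rw [hdim] at hrn
    have hr1 : Module.finrank F
        ↥(LinearMap.range ((LinearMap.proj i : (Fin n → F) →ₗ[F] F).comp C.subtype)) ≤ 1 := by
      have := Submodule.finrank_le
        (LinearMap.range ((LinearMap.proj i : (Fin n → F) →ₗ[F] F).comp C.subtype))
      simpa using this
    rw [hK]; beta_reduce
    omega
  -- cardinalities
  haveI : Fintype ↥C := Fintype.ofFinite _
  have hcardC : Fintype.card ↥C = q ^ 2 := by
    rw [Module.card_eq_pow_finrank (K := F) (V := ↥C), hdim, hq]
  have hcardK : ∀ i, Nat.card ↥(K i) = q ^ (Module.finrank F ↥(K i)) := by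
    intro i
    haveI : Fintype ↥(K i) := Fintype.ofFinite _
    rw [Nat.card_eq_fintype_card, Module.card_eq_pow_finrank (K := F) (V := ↥(K i)), hq]
  -- kernel card as a filter card
  have hKfilt : ∀ i, (Finset.univ.filter fun v : ↥C => (v : Fin n → F) i = 0).card
      = Nat.card ↥(K i) := by
    intro i
    rw [Nat.card_eq_fintype_card, Fintype.card_subtype]
    apply Finset.card_bij (fun v _ => v)
    · intro v hv
      simp only [Finset.mem_filter, Finset.mem_univ, true_and] at hv ⊢
      exact hv
    · intro a ha b hb h; exact h
    · intro b hb
      simp only [Finset.mem_filter, Finset.mem_univ, true_and] at hb ⊢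
      exact ⟨b, hb, rfl⟩
  -- double counting
  have hswap : ∑ v : ↥C, (Finset.univ.filter fun i => (v : Fin n → F) i ≠ 0).card
      = ∑ i : Fin n, (Finset.univ.filter fun v : ↥C => (v : Fin n → F) i ≠ 0).card := by
    simp only [Finset.card_filter]
    exact Finset.sum_comm
  -- a nonzero codeword exists
  have hCbot : C ≠ ⊥ := by
    intro h; rw [h] at hdim; simp [finrank_bot] at hdim
  obtain ⟨v0, hv0C, hv00⟩ := Submodule.exists_mem_ne_zero_of_ne_bot hCbot
  have hω1 : 1 ≤ ω := by
    rw [← hwt v0 hv0C hv00]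
    obtain ⟨i, hi⟩ := Function.ne_iff.mp hv00
    exact Finset.card_pos.mpr ⟨i, by simpa using hi⟩
  have hωn : ω ≤ n := by
    rw [← hwt v0 hv0C hv00]
    calc (Finset.univ.filter fun i => v0 i ≠ 0).card ≤ Finset.univ.card :=
          Finset.card_filter_le _ _
      _ = n := by simp
  -- LHS of double count
  have hLHS : ∑ v : ↥C, (Finset.univ.filter fun i => (v : Fin n → F) i ≠ 0).card
      = (q ^ 2 - 1) * ω := by
    have h0 : (Finset.univ.filter fun i => ((0 : ↥C) : Fin n → F) i ≠ 0).card = 0 := by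
      simp
    have hsum : ∑ v ∈ Finset.univ.erase (0 : ↥C),
        (Finset.univ.filter fun i => (v : Fin n → F) i ≠ 0).card
        = ∑ _v ∈ Finset.univ.erase (0 : ↥C), ω := by
      refine Finset.sum_congr rfl fun v hv => ?_
      exact hwt v v.2
        (by simpa [ZeroMemClass.coe_eq_zero] using Finset.ne_of_mem_erase hv)
    rw [← Finset.add_sum_erase _ _ (Finset.mem_univ (0 : ↥C)), h0, zero_add, hsum,
      Finset.sum_const, Finset.card_erase_of_mem (Finset.mem_univ _), Finset.card_univ,
      hcardC, smul_eq_mul]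
  -- RHS terms
  have hterm : ∀ i : Fin n, (Finset.univ.filter fun v : ↥C => (v : Fin n → F) i ≠ 0).card
      = if Module.finrank F ↥(K i) = 1 then q ^ 2 - q else 0 := by
    intro i
    have hsplit := Finset.card_filter_add_card_filter_not
      (s := (Finset.univ : Finset ↥C)) (p := fun v : ↥C => (v : Fin n → F) i = 0)
    rw [hKfilt i, hcardK i, Finset.card_univ, hcardC] at hsplit
    have : (Finset.univ.filter fun v : ↥C => ¬ (v : Fin n → F) i = 0).card
        = q ^ 2 - q ^ Module.finrank F ↥(K i) := by omega
    rcases hd12 i with h | h <;> simp only [h, pow_one, pow_two] at this ⊢ <;>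
      simp [this, pow_two]
  have hRHS : ∑ i : Fin n, (Finset.univ.filter fun v : ↥C => (v : Fin n → F) i ≠ 0).card
      = (Finset.univ.filter fun i : Fin n => Module.finrank F ↥(K i) = 1).card * (q ^ 2 - q) := by
    rw [Finset.sum_congr rfl fun i _ => hterm i, ← Finset.sum_filter,
      Finset.sum_const, smul_eq_mul]
  set m := (Finset.univ.filter fun i : Fin n => Module.finrank F ↥(K i) = 1).card with hm
  have hE : (q ^ 2 - 1) * ω = m * (q ^ 2 - q) := by
    rw [← hLHS, hswap, hRHS]
  -- simplify the equation
  have hE' : (q + 1) * ω = m * q := by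
    have hq1 : 1 ≤ q := by omega
    have hqs : 1 ≤ q ^ 2 := Nat.one_le_pow _ _ (by omega)
    have hqq : q ≤ q ^ 2 := by nlinarith
    have h1 : q ^ 2 - 1 = (q + 1) * (q - 1) := by zify [hqs, hq1]; ring
    have h2 : q ^ 2 - q = q * (q - 1) := by zify [hqq, hq1]; ring
    rw [h1, h2] at hE
    refine Nat.eq_of_mul_eq_mul_right (show 0 < q - 1 by omega) ?_
    ring_nf at hE ⊢
    exact hE
  have hmn : m ≤ n := by
    have := Finset.card_filter_le (Finset.univ : Finset (Fin n))
      (fun i => Module.finrank F ↥(K i) = 1)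
    simpa using this
  -- divisibility gives ω = q
  have hdvd : q ∣ ω := Nat.Coprime.dvd_of_dvd_mul_left
    (show Nat.Coprime q (q + 1) by simp) ⟨m, by rw [hE']; ring⟩
  obtain ⟨c, rfl⟩ := hdvd
  have hc1 : c = 1 := by
    rcases c with _ | _ | c
    · simp at hω1
    · rfl
    · exfalso
      have h2 : q * 2 ≤ q * (c + 2) := Nat.mul_le_mul_left q (by omega)
      have := hωn
      nlinarith
  subst hc1
  rw [mul_one] at hE' hω1 hωn ⊢
  -- hence m = n and all kernels are 1-dimensional
  have hmq : m = q + 1 := by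
    exact (Nat.eq_of_mul_eq_mul_right (show 0 < q by omega) hE').symm
  have hall : ∀ i : Fin n, Module.finrank F ↥(K i) = 1 := by
    intro i
    have huniv : (Finset.univ.filter fun i : Fin n => Module.finrank F ↥(K i) = 1)
        = Finset.univ := by
      apply Finset.eq_univ_of_card
      rw [← hm, hmq, Fintype.card_fin]
      omega
    have hi : i ∈ Finset.univ.filter fun j : Fin n => Module.finrank F ↥(K j) = 1 := by
      rw [huniv]; exact Finset.mem_univ i
    exact (Finset.mem_filter.mp hi).2
  refine ⟨rfl, hall, ?_⟩
  -- injectivity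
  intro i j hij
  by_contra hne
  have hKbot : K i ≠ ⊥ := by
    intro h
    have := hall i
    rw [h] at this
    simp [finrank_bot] at this
  obtain ⟨w, hwK, hw0⟩ := Submodule.exists_mem_ne_zero_of_ne_bot hKbot
  have hwKj : w ∈ K j := by rw [hK] at hij ⊢; beta_reduce at hij ⊢; rw [← hij]; exact hwK
  have hwi : (w : Fin n → F) i = 0 := hwK
  have hwj : (w : Fin n → F) j = 0 := hwKj
  have hwC : (w : Fin n → F) ∈ C := w.2
  have hwne : (w : Fin n → F) ≠ 0 := by simpa using hw0
  have hcard := hwt w hwC hwne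
  have hsub : (Finset.univ.filter fun k => (w : Fin n → F) k ≠ 0)
      ⊆ (Finset.univ.erase i).erase j := by
    intro k hk
    simp only [Finset.mem_filter, Finset.mem_univ, true_and] at hk
    refine Finset.mem_erase.mpr ⟨?_, Finset.mem_erase.mpr ⟨?_, Finset.mem_univ _⟩⟩
    · rintro rfl; exact hk hwj
    · rintro rfl; exact hk hwi
  have hle := Finset.card_le_card hsub
  rw [hcard, Finset.card_erase_of_mem, Finset.card_erase_of_mem (Finset.mem_univ _),
    Finset.card_univ, Fintype.card_fin] at hle
  · omega
  · exact Finset.mem_erase.mpr ⟨Ne.symm hne, Finset.mem_univ _⟩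
end

section
/- In the wreath-product setup, the subgroup H = E:⟨θ⟩ is core-free in G = T^n⟨θ⟩ (so G acts faithfully and transitively by right multiplication on the set [G:H] of right cosets of H in G); T^n is the unique minimal normal subgroup of G; T^n acts transitively on [G:H], so G is quasiprimitive on [G:H]; and π_i(T^n ∩ H) = R ∩ T for every 1 ≤ i ≤ n, i.e. T^n ∩ H is a subdirect product of (R ∩ T)^n. -/
/-- The cyclic-shift automorphism of `ZMod n → X` by `z`. -/
def shiftEquiv (n : ℕ) (X : Type*) [Group X] (z : ZMod n) : (ZMod n → X) ≃* (ZMod n → X) where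
  toFun f i := f (i - z)
  invFun f i := f (i + z)
  left_inv f := funext fun i => by
    show f (i + z - z) = f i
    rw [add_sub_cancel_right]
  right_inv f := funext fun i => by
    show f (i - z + z) = f i
    rw [sub_add_cancel]
  map_mul' f g := rfl

/-- The action of the cyclic group `ZMod n` on `ZMod n → X` by cyclic coordinate shifts. -/
def shiftHom (n : ℕ) (X : Type*) [Group X] :
    Multiplicative (ZMod n) →* MulAut (ZMod n → X) where
  toFun z := shiftEquiv n X z.toAdd
  map_one' := by
    ext f i
    show f (i - 0) = f i
    rw [sub_zero]
  map_mul' z w := by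
    ext f i
    show f (i - (z.toAdd + w.toAdd)) = f (i - z.toAdd - w.toAdd)
    rw [sub_sub]

/-- The wreath product `X ≀ Z_n = X^n : ⟨τ⟩` with `τ` the cyclic coordinate shift. -/
abbrev Wr (n : ℕ) (X : Type*) [Group X] :=
  SemidirectProduct (ZMod n → X) (Multiplicative (ZMod n)) (shiftHom n X)

/-- The shift element `τ` of the wreath product. -/
def tauEl (n : ℕ) (X : Type*) [Group X] : Wr n X :=
  SemidirectProduct.inr (Multiplicative.ofAdd 1)

/-- The element `θ = d₀τ`, where `d₀ = (bc, b, bc, …, bc)`. -/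
def thetaEl (n : ℕ) {X : Type*} [Group X] (b c : X) : Wr n X :=
  SemidirectProduct.inl (fun i => if i = (1 : ZMod n) then b else b * c) * tauEl n X

/-- The base subgroup `T^n` of the wreath product. -/
def TnSub (n : ℕ) {X : Type*} [Group X] (T : Subgroup X) : Subgroup (Wr n X) :=
  Subgroup.map SemidirectProduct.inl (Subgroup.pi Set.univ fun _ => T)

/-- The subgroup `G = T^n⟨θ⟩`. -/
def Gsub (n : ℕ) {X : Type*} [Group X] (T : Subgroup X) (b c : X) : Subgroup (Wr n X) :=
  TnSub n T ⊔ Subgroup.zpowers (thetaEl n b c)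

/-- The subgroup `H = E:⟨θ⟩`. -/
def Hsub (n : ℕ) {X : Type*} [Group X] (E : Subgroup (ZMod n → X)) (b c : X) :
    Subgroup (Wr n X) :=
  Subgroup.map SemidirectProduct.inl E ⊔ Subgroup.zpowers (thetaEl n b c)

/-- The coset graph `Cos(G, H, g)` on the cosets of `H` in `G`, where cosets `xH`, `yH` are
adjacent iff `x⁻¹y ∈ HgH`. -/
def cosetGraph {W : Type*} [Group W] (G H : Subgroup W) (g : W) :
    SimpleGraph (↥G ⧸ Subgroup.subgroupOf H G) :=
  SimpleGraph.fromRel fun u v => ∃ x y : ↥G,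
    (QuotientGroup.mk x : ↥G ⧸ Subgroup.subgroupOf H G) = u ∧
    (QuotientGroup.mk y : ↥G ⧸ Subgroup.subgroupOf H G) = v ∧
    ∃ h₁ ∈ H, ∃ h₂ ∈ H, ((x⁻¹ * y : ↥G) : W) = h₁ * g * h₂

/-- 2-arc-transitivity of a group action on a graph. -/
def TwoArcTransAct {V : Type*} (Γ : SimpleGraph V) (G : Type*) [Group G] [MulAction G V] :
    Prop :=
  ∀ a b c a' b' c' : V, Γ.Adj a b → Γ.Adj b c → a ≠ c →
    Γ.Adj a' b' → Γ.Adj b' c' → a' ≠ c' →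
    ∃ g : G, g • a = a' ∧ g • b = b' ∧ g • c = c'

/-!
`T^n` is the unique minimal normal subgroup of `G`: a nontrivial subgroup normalised by `G`
yields, after two commutators with elements of `T^n` (using `C_X(T) = 1`), a nontrivial element
supported on a single coordinate; simplicity of `T` puts all of `T` into that coordinate, and
conjugation by `θ` moves it to every other coordinate.

As `b` and `c` commute, `θ^n` is the constant vector with entry `v = b (bc)^(n-1) = b²c`, so
`H ∩ X^n = E · ⟨(v, …, v)⟩`; since `|b|` is odd, `⟨b, c⟩ = ⟨v⟩`. Projecting to a coordinate gives
`F⟨v⟩ ∩ T = R ∩ T`, where `F ≤ T` because `|X : T| ≤ 2 < |F|` and `⟨b, c⟩` is transitive on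
`F \ 1`. If `H` contained `T^n`, then, as `F ∩ ⟨v⟩ = 1`, the elements of `T^n` supported at one
coordinate would lie in the abelian group `E`; so the core of `H` in `G` contains no minimal normal
subgroup of `G` and is trivial.
-/

open Subgroup SemidirectProduct Multiplicative
open scoped commutatorElement

lemma Pi.commutatorElement_mulSingle {ι : Type*} [DecidableEq ι] {G : Type*} [Group G] (i : ι)
    (u : G) (g : ι → G) : ⁅(Pi.mulSingle i u : ι → G), g⁆ = Pi.mulSingle i ⁅u, g i⁆ := by
  funext j
  by_cases hj : j = i
  · subst hj
    simp [commutatorElement_def]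
  · simp [commutatorElement_def, Pi.mulSingle_eq_of_ne hj]

lemma ZMod.prod_range_natCast {n : ℕ} [NeZero n] {M : Type*} [CommMonoid M] (g : ZMod n → M) :
    ∏ k ∈ Finset.range n, g k = ∏ x, g x :=
  Finset.prod_nbij' (fun k => (k : ZMod n)) ZMod.val (by simp) (by simp [ZMod.val_lt])
    (fun k hk => ZMod.val_cast_of_lt (Finset.mem_range.1 hk)) (fun x _ => ZMod.natCast_zmod_val x)
    (fun _ _ => rfl)

lemma ZMod.prod_ite_eq_mul_pow {n : ℕ} [NeZero n] {M : Type*} [CommMonoid M] (i : ZMod n)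
    (x y : M) : ∏ j, (if j = i then x else y) = x * y ^ (n - 1) := by
  rw [← Finset.mul_prod_erase _ _ (Finset.mem_univ i), if_pos rfl,
    Finset.prod_congr rfl fun j hj => if_neg (Finset.ne_of_mem_erase hj), Finset.prod_const,
    Finset.card_erase_of_mem (Finset.mem_univ i), Finset.card_univ, ZMod.card]

lemma odd_div_gcd_two_sub_one {q : ℕ} (hq : 2 ≤ q) (h : Even q ∨ 4 ∣ q + 1) :
    Odd ((q - 1) / Nat.gcd 2 (q - 1)) := by
  rcases Nat.even_or_odd q with hq2 | hq2
  · have hodd : Odd (q - 1) := by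
      obtain ⟨k, rfl⟩ := hq2
      exact ⟨k - 1, by omega⟩
    rwa [Nat.coprime_two_left.mpr hodd, Nat.div_one]
  · obtain ⟨k, rfl⟩ := hq2
    have h4 : 4 ∣ 2 * k + 1 + 1 := h.resolve_left (by simp [parity_simps])
    rw [Nat.gcd_eq_left ⟨k, by omega⟩]
    exact ⟨k / 2, by omega⟩

section GroupTheory

variable {X : Type*} [Group X]

lemma Subgroup.le_of_index_lt_card {T F : Subgroup X} [hT : T.Normal] [T.FiniteIndex]
    (hindex : T.index < Nat.card F)
    (htrans : ∀ y ∈ F, y ≠ 1 → ∀ z ∈ F, z ≠ 1 → ∃ x : X, x * y * x⁻¹ = z) : F ≤ T := by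
  by_contra hFT
  obtain ⟨f, hfF, hfT⟩ := SetLike.not_le_iff_exists.mp hFT
  have hf1 : f ≠ 1 := fun h => hfT (h ▸ T.one_mem)
  have hTF : T ⊓ F = ⊥ := (eq_bot_iff_forall _).mpr fun g hg => by
    by_contra hg1
    obtain ⟨x, rfl⟩ := htrans g (mem_inf.mp hg).2 hg1 f hfF hf1
    exact hfT (hT.conj_mem g (mem_inf.mp hg).1 x)
  have : Nat.card F ≤ T.index :=
    calc Nat.card F = (T ⊓ F).relIndex F := by rw [hTF, relIndex_bot_left]
      _ = T.relIndex F := inf_relIndex_right T F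
      _ ≤ T.relIndex ⊤ := relIndex_le_of_le_right le_top (by simpa using FiniteIndex.index_ne_zero)
      _ = T.index := relIndex_top_right T
  omega

lemma closure_pair_eq_zpowers_sq_mul {b c : X} (hbc : Commute b c) (hb : Odd (orderOf b))
    (hc : c ^ 2 = 1) : closure {b, c} = zpowers (b ^ 2 * c) := by
  refine le_antisymm ?_
    (zpowers_le.mpr (mul_mem (pow_mem (subset_closure (by simp)) 2) (subset_closure (by simp))))
  obtain ⟨j, hj⟩ := hb
  have hbm : b ^ (2 * j + 1) = 1 := hj ▸ pow_orderOf_eq_one b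
  have hcz : c ∈ zpowers (b ^ 2 * c) := by
    have h : (b ^ 2 * c) ^ (2 * j + 1) = c := by
      rw [(hbc.pow_left 2).mul_pow, ← pow_mul, mul_comm, pow_mul, hbm, one_pow, one_mul,
        pow_succ, pow_mul, hc, one_pow, one_mul]
    have hmem := pow_mem (mem_zpowers (b ^ 2 * c)) (2 * j + 1)
    rwa [h] at hmem
  have hb2 : b ^ 2 ∈ zpowers (b ^ 2 * c) := by
    simpa using mul_mem (mem_zpowers (b ^ 2 * c)) (inv_mem hcz)
  have hb : b ∈ zpowers (b ^ 2 * c) := by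
    have h : (b ^ 2) ^ (j + 1) = b := by
      rw [← pow_mul, show 2 * (j + 1) = 2 * j + 1 + 1 by ring, pow_succ, hbm, one_mul]
    have hmem := pow_mem hb2 (j + 1)
    rwa [h] at hmem
  rw [closure_le]
  rintro _ (rfl | rfl)
  exacts [hb, hcz]

lemma eq_one_of_forall_conj_mem {G H M : Subgroup X}
    (hM : ∀ N : Subgroup X, (∀ g ∈ G, ∀ x ∈ N, g * x * g⁻¹ ∈ N) → N ≠ ⊥ → M ≤ N)
    (hMH : ¬ M ≤ H) {x : X} (hx : ∀ g ∈ G, g * x * g⁻¹ ∈ H) : x = 1 := by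
  -- the core of `H` with respect to conjugation by `G`
  let K : Subgroup X := ⨅ g : G, H.comap (MulAut.conj (g : X)).toMonoidHom
  have hK (y : X) : y ∈ K ↔ ∀ g ∈ G, g * y * g⁻¹ ∈ H := by simp [K, mem_iInf]
  by_contra hx1
  refine hMH ((hM K (fun g hg y hy => ?_) ?_).trans fun y hy => by
    simpa using (hK y).mp hy 1 G.one_mem)
  · rw [hK] at hy ⊢
    intro g' hg'
    simpa [mul_assoc] using hy (g' * g) (mul_mem hg' hg)
  · intro hKbot
    have hxK := (hK x).mpr hx
    rw [hKbot, mem_bot] at hxK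
    exact hx1 hxK

end GroupTheory

section WreathProduct

variable {n : ℕ} {X : Type*} [Group X]

instance [Finite X] [NeZero n] : Finite (Wr n X) :=
  Finite.of_equiv _ SemidirectProduct.equivProd.symm

lemma shiftHom_apply (z : Multiplicative (ZMod n)) (g : ZMod n → X) (i : ZMod n) :
    shiftHom n X z g i = g (i - z.toAdd) := rfl

lemma thetaEl_eq (b c : X) :
    thetaEl n b c = inl (fun i => if i = (1 : ZMod n) then b else b * c) * inr (ofAdd 1) := rfl

lemma rightHom_thetaEl (b c : X) : rightHom (thetaEl n b c) = ofAdd 1 := by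
  simp [thetaEl, tauEl]

lemma conj_inl_mul_inr (a : ZMod n → X) (z : Multiplicative (ZMod n)) (g : ZMod n → X) :
    (inl a * inr z : Wr n X) * inl g * (inl a * inr z)⁻¹ =
      inl (a * shiftHom n X z g * a⁻¹) := by
  rw [map_mul, map_mul, map_inv, inl_aut, map_inv]
  group

lemma conj_inl_mulSingle (a : ZMod n → X) (z : Multiplicative (ZMod n)) (i : ZMod n) (u : X) :
    (inl a * inr z : Wr n X) * inl (Pi.mulSingle i u) * (inl a * inr z)⁻¹ =
      inl (Pi.mulSingle (i + z.toAdd) (a (i + z.toAdd) * u * (a (i + z.toAdd))⁻¹)) := by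
  rw [conj_inl_mul_inr]
  congr 1
  funext j
  by_cases hj : j = i + z.toAdd
  · subst hj
    simp [shiftHom_apply]
  · have hj' : j - z.toAdd ≠ i := fun h => hj (by rw [← h, sub_add_cancel])
    simp [shiftHom_apply, Pi.mulSingle_eq_of_ne hj, Pi.mulSingle_eq_of_ne hj']

variable {T : Subgroup X}

lemma inl_mem_TnSub_iff {g : ZMod n → X} : inl g ∈ TnSub n T ↔ ∀ i, g i ∈ T := by
  simp [TnSub, inl_injective.eq_iff, mem_pi]

lemma inl_mulSingle_mem_TnSub {i : ZMod n} {u : X} (hu : u ∈ T) :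
    inl (Pi.mulSingle i u) ∈ TnSub n T := by
  refine inl_mem_TnSub_iff.mpr fun j => ?_
  by_cases hj : j = i
  · subst hj
    simpa using hu
  · simp [Pi.mulSingle_eq_of_ne hj]

lemma TnSub_ne_bot (hT : T ≠ ⊥) : TnSub n T ≠ ⊥ := by
  obtain ⟨u, hu, hu1⟩ := T.bot_or_exists_ne_one.resolve_left hT
  intro h
  have hmem := inl_mulSingle_mem_TnSub (n := n) (i := 0) hu
  rw [h, mem_bot, map_eq_one_iff _ inl_injective, Pi.mulSingle_eq_one_iff] at hmem
  exact hu1 hmem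

lemma TnSub_normal (hT : T.Normal) : (TnSub n T).Normal where
  conj_mem x hx w := by
    obtain ⟨g, hg, rfl⟩ := hx
    rw [← inl_left_mul_inr_right w, conj_inl_mul_inr, inl_mem_TnSub_iff]
    intro i
    simpa [shiftHom_apply] using hT.conj_mem _ ((mem_pi _).mp hg _ trivial) (w.left i)

lemma exists_mem_Hsub_mul_mem_TnSub (hT : T.Normal) {E : Subgroup (ZMod n → X)} {b c : X}
    {g : Wr n X} (hg : g ∈ Gsub n T b c) : ∃ h ∈ Hsub n E b c, ∃ t ∈ TnSub n T, g = h * t := by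
  have := TnSub_normal (n := n) hT
  rw [Gsub, sup_comm, ← SetLike.mem_coe, mul_normal] at hg
  obtain ⟨h, hh, t, ht, rfl⟩ := hg
  exact ⟨h, mem_sup_right hh, t, ht, rfl⟩

end WreathProduct

section PowerOfTheta

variable {n : ℕ}

def wrMap {A X : Type*} [Group A] [Group X] (φ : A →* X) : Wr n A →* Wr n X :=
  SemidirectProduct.map (φ.compLeft (ZMod n)) (MonoidHom.id _)
    fun _ => MonoidHom.ext fun _ => rfl

lemma wrMap_inl {A X : Type*} [Group A] [Group X] (φ : A →* X) (g : ZMod n → A) :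
    wrMap φ (inl g) = inl fun i => φ (g i) :=
  SemidirectProduct.map_inl _ _ _ _

lemma wrMap_thetaEl {A X : Type*} [Group A] [Group X] (φ : A →* X) (b c : A) :
    wrMap (n := n) φ (thetaEl n b c) = thetaEl n (φ b) (φ c) := by
  rw [thetaEl, tauEl, map_mul, wrMap_inl, wrMap, SemidirectProduct.map_inr]
  simp only [apply_ite φ, map_mul]
  rfl

lemma inl_mul_tauEl_pow {A : Type*} [CommGroup A] (a : ZMod n → A) (m : ℕ) :
    (inl a * tauEl n A) ^ m =
      inl (∏ k ∈ Finset.range m, fun i => a (i - k)) * inr (ofAdd (m : ZMod n)) := by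
  induction m with
  | zero => simp
  | succ m ih =>
    have hshift : (inr (ofAdd (m : ZMod n)) : Wr n A) * inl a =
        inl (fun i => a (i - m)) * inr (ofAdd (m : ZMod n)) := by
      change _ = inl (shiftHom n A (ofAdd (m : ZMod n)) a) * _
      rw [inl_aut, map_inv]
      group
    rw [pow_succ, ih, tauEl, mul_assoc, ← mul_assoc (inr _), hshift, Finset.prod_range_succ]
    push_cast
    simp only [map_mul, mul_assoc, ofAdd_add]

lemma inl_mul_tauEl_pow_self {A : Type*} [CommGroup A] [NeZero n] (a : ZMod n → A) :
    (inl a * tauEl n A) ^ n = inl fun _ => ∏ j, a j := by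
  rw [inl_mul_tauEl_pow, ZMod.natCast_self, ofAdd_zero, map_one, mul_one]
  congr 1
  funext i
  rw [Finset.prod_apply, ZMod.prod_range_natCast (fun k => a (i - k))]
  exact Fintype.prod_equiv (Equiv.subLeft i) _ _ fun _ => rfl

lemma thetaEl_pow_self {X : Type*} [Group X] [NeZero n] {b c : X} (hbc : Commute b c) :
    thetaEl n b c ^ n = inl fun _ => b * (b * c) ^ (n - 1) := by
  -- `θ` is the image of the corresponding element of the wreath product over the abelian group
  -- `ℤ × ℤ` under the map induced by `(k, l) ↦ b ^ k * c ^ l`.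
  let φ := (zpowersHom X b).noncommCoprod (zpowersHom X c) fun _ _ => hbc.zpow_zpow _ _
  let β : Multiplicative ℤ × Multiplicative ℤ := (ofAdd 1, 1)
  let γ : Multiplicative ℤ × Multiplicative ℤ := (1, ofAdd 1)
  have hφβ : φ β = b := by
    change b ^ (1 : ℤ) * c ^ (0 : ℤ) = b
    simp
  have hφγ : φ γ = c := by
    change b ^ (0 : ℤ) * c ^ (1 : ℤ) = c
    simp
  rw [← hφβ, ← hφγ, ← wrMap_thetaEl, ← map_pow, thetaEl_eq, ← tauEl, inl_mul_tauEl_pow_self,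
    ZMod.prod_ite_eq_mul_pow, wrMap_inl, map_mul, map_pow, map_mul]

lemma thetaEl_pow_self_eq_sq_mul {X : Type*} [Group X] {m : ℕ} (hn : n = m + 2) {b c : X}
    (hbc : Commute b c) (hb : b ^ m = 1) (hc : c ^ m = 1) :
    thetaEl n b c ^ n = inl fun _ => b ^ 2 * c := by
  have : NeZero n := ⟨by omega⟩
  rw [thetaEl_pow_self hbc, show n - 1 = m + 1 by omega, pow_succ, hbc.mul_pow, hb, hc,
    one_mul, one_mul, ← mul_assoc, sq]

end PowerOfTheta

section MinimalNormal

variable {n : ℕ} {X : Type*} [Group X] {T : Subgroup X}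

lemma eq_one_of_forall_commute_inl_mulSingle (hcent : centralizer (T : Set X) = ⊥)
    (hT : T ≠ ⊥) {x : Wr n X}
    (hx : ∀ i, ∀ u ∈ T, x * inl (Pi.mulSingle i u) = inl (Pi.mulSingle i u) * x) : x = 1 := by
  obtain ⟨u₀, hu₀T, hu₀⟩ := T.bot_or_exists_ne_one.resolve_left hT
  set z := x.right.toAdd
  have hconj (i : ZMod n) (u : X) (hu : u ∈ T) :
      Pi.mulSingle (i + z) (x.left (i + z) * u * (x.left (i + z))⁻¹) =
        (Pi.mulSingle i u : ZMod n → X) := by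
    apply inl_injective (φ := shiftHom n X)
    rw [← conj_inl_mulSingle, inl_left_mul_inr_right, hx i u hu, mul_inv_cancel_right]
  have hz : z = 0 := by
    by_contra hz
    have h := congrFun (hconj 0 u₀ hu₀T) (0 + z)
    rw [Pi.mulSingle_eq_same, Pi.mulSingle_eq_of_ne (by simpa using hz), conj_eq_one_iff] at h
    exact hu₀ h
  have hleft : x.left = 1 := funext fun i => by
    have hi : x.left i ∈ centralizer (T : Set X) := fun u hu => by
      have h : x.left i * u * (x.left i)⁻¹ = u := by simpa [hz] using hconj i u hu
      exact (mul_inv_eq_iff_eq_mul.mp h).symm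
    rw [hcent] at hi
    exact hi
  rw [← inl_left_mul_inr_right x, hleft, show x.right = 1 from hz, map_one, map_one, one_mul]

lemma exists_inl_mulSingle_mem_of_ne_bot (hT : T.Normal) (hcent : centralizer (T : Set X) = ⊥)
    (hTbot : T ≠ ⊥) {N : Subgroup (Wr n X)} (hN : ∀ t ∈ TnSub n T, ∀ x ∈ N, t * x * t⁻¹ ∈ N)
    (hNbot : N ≠ ⊥) : ∃ i, ∃ u ∈ T, u ≠ 1 ∧ inl (Pi.mulSingle i u) ∈ N := by
  have hcomm {t x : Wr n X} (ht : t ∈ TnSub n T) (hx : x ∈ N) : ⁅t, x⁆ ∈ N ⊓ TnSub n T :=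
    mem_inf.mpr ⟨mul_mem (hN t ht x hx) (inv_mem hx), by
      simpa only [commutatorElement_def, mul_assoc] using
        mul_mem ht ((TnSub_normal hT).conj_mem _ (inv_mem ht) x)⟩
  obtain ⟨x, hxN, hx⟩ := N.bot_or_exists_ne_one.resolve_left hNbot
  obtain ⟨i, u, hu, hux⟩ : ∃ i, ∃ u ∈ T, ⁅inl (Pi.mulSingle i u : ZMod n → X), x⁆ ≠ 1 := by
    by_contra! h
    exact hx (eq_one_of_forall_commute_inl_mulSingle hcent hTbot fun i u hu =>
      (commutatorElement_eq_one_iff_mul_comm.mp (h i u hu)).symm)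
  obtain ⟨hyN, g, hg, hgy⟩ := hcomm (inl_mulSingle_mem_TnSub hu) hxN
  have hg1 : g ≠ 1 := by
    rintro rfl
    exact hux (by rw [← hgy, map_one])
  obtain ⟨j, hj⟩ := Function.ne_iff.mp hg1
  obtain ⟨s, hs, hsg⟩ : ∃ s ∈ T, ⁅s, g j⁆ ≠ 1 := by
    by_contra! h
    refine hj (mem_bot.mp ?_)
    rw [← hcent]
    exact fun s hs => commutatorElement_eq_one_iff_mul_comm.mp (h s hs)
  have hgT : g j ∈ T := (mem_pi _).mp hg j trivial
  refine ⟨j, ⁅s, g j⁆, ?_, hsg, ?_⟩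
  · simpa only [commutatorElement_def] using
      mul_mem (mul_mem (mul_mem hs hgT) (inv_mem hs)) (inv_mem hgT)
  · rw [← Pi.commutatorElement_mulSingle, map_commutatorElement, hgy]
    exact (mem_inf.mp (hcomm (inl_mulSingle_mem_TnSub hs) hyN)).1

lemma inl_mulSingle_mem_of_isSimpleGroup (hTsimple : IsSimpleGroup T) {N : Subgroup (Wr n X)}
    (hN : ∀ t ∈ TnSub n T, ∀ x ∈ N, t * x * t⁻¹ ∈ N) {i : ZMod n} {u₀ : X} (hu₀T : u₀ ∈ T)
    (hu₀ : u₀ ≠ 1) (hu₀N : inl (Pi.mulSingle i u₀) ∈ N) {u : X} (hu : u ∈ T) :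
    inl (Pi.mulSingle i u) ∈ N := by
  let ψ : X →* Wr n X := inl.comp (MonoidHom.mulSingle (fun _ => X) i)
  let Q : Subgroup T := (N.comap ψ).subgroupOf T
  have hQ : Q.Normal := ⟨fun x hx s => by
    simpa [Q, mem_subgroupOf] using hN (ψ s) (inl_mulSingle_mem_TnSub s.2) _ hx⟩
  have hQ_top : Q = ⊤ := (hTsimple.eq_bot_or_eq_top_of_normal Q hQ).resolve_left fun h => by
    have : (⟨u₀, hu₀T⟩ : T) ∈ Q := hu₀N
    rw [h, mem_bot] at this
    exact hu₀ (congrArg Subtype.val this)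
  have : (⟨u, hu⟩ : T) ∈ Q := hQ_top ▸ mem_top _
  exact this

lemma inl_mulSingle_add_one_mem (hT : T.Normal) {b c : X} {N : Subgroup (Wr n X)}
    (hN : ∀ x ∈ N, thetaEl n b c * x * (thetaEl n b c)⁻¹ ∈ N) {i : ZMod n}
    (hi : ∀ u ∈ T, inl (Pi.mulSingle i u) ∈ N) {u : X} (hu : u ∈ T) :
    inl (Pi.mulSingle (i + 1) u) ∈ N := by
  set d := fun j : ZMod n => if j = 1 then b else b * c
  have h := hN _ (hi ((d (i + 1))⁻¹ * u * d (i + 1))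
    (by simpa using hT.conj_mem u hu (d (i + 1))⁻¹))
  rw [thetaEl_eq, conj_inl_mulSingle] at h
  change inl (Pi.mulSingle (i + 1) (d (i + 1) * _ * (d (i + 1))⁻¹)) ∈ N at h
  rwa [show d (i + 1) * ((d (i + 1))⁻¹ * u * d (i + 1)) * (d (i + 1))⁻¹ = u by group] at h

lemma TnSub_le_of_forall_conj_mem [NeZero n] (hT : T.Normal) (hTsimple : IsSimpleGroup T)
    (hcent : centralizer (T : Set X) = ⊥) {b c : X} {N : Subgroup (Wr n X)}
    (hN : ∀ g ∈ Gsub n T b c, ∀ x ∈ N, g * x * g⁻¹ ∈ N) (hNbot : N ≠ ⊥) : TnSub n T ≤ N := by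
  have hTN : ∀ t ∈ TnSub n T, ∀ x ∈ N, t * x * t⁻¹ ∈ N := fun t ht => hN t (mem_sup_left ht)
  obtain ⟨i, u₀, hu₀T, hu₀, hu₀N⟩ := exists_inl_mulSingle_mem_of_ne_bot hT hcent
    ((nontrivial_iff_ne_bot T).mp inferInstance) hTN hNbot
  have hall (k : ℕ) : ∀ u ∈ T, inl (Pi.mulSingle (i + k) u) ∈ N := by
    induction k with
    | zero =>
      simpa using fun u hu => inl_mulSingle_mem_of_isSimpleGroup hTsimple hTN hu₀T hu₀ hu₀N hu
    | succ k ih =>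
      intro u hu
      rw [Nat.cast_succ, ← add_assoc]
      exact inl_mulSingle_add_one_mem hT (hN _ (mem_sup_right (mem_zpowers _))) ih hu
  classical
  refine map_le_iff_le_comap.mpr (pi_le_iff.mpr fun j => ?_)
  rintro _ ⟨u, hu, rfl⟩
  simpa using hall (j - i).val u hu

end MinimalNormal

section BaseOfH

variable {n : ℕ} {X : Type*} [Group X] {T F : Subgroup X} {E : Subgroup (ZMod n → X)}
  {H : Subgroup (Wr n X)} {v : X}

lemma inl_mem_Hsub_iff [Finite X] [NeZero n] {b c : X}
    (hEnorm : ∀ x ∈ E.map (inl : (ZMod n → X) →* Wr n X),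
      thetaEl n b c * x * (thetaEl n b c)⁻¹ ∈ E.map (inl : (ZMod n → X) →* Wr n X))
    (hθ : thetaEl n b c ^ n = inl fun _ => v) {z : ZMod n → X} :
    inl z ∈ Hsub n E b c ↔ ∃ e ∈ E, ∃ k : ℤ, z = e * fun _ => v ^ k := by
  have hθE := zpowers_le.mpr (mem_normalizer_fintype hEnorm)
  have hθnk (k : ℤ) : thetaEl n b c ^ ((n : ℤ) * k) = inl fun _ => v ^ k := by
    rw [zpow_mul, zpow_natCast, hθ, ← map_zpow]
    rfl
  rw [← SetLike.mem_coe, Hsub, coe_mul_of_right_le_normalizer_left _ _ hθE, Set.mem_mul]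
  constructor
  · rintro ⟨_, ⟨e, he, rfl⟩, _, ⟨m, rfl⟩, hz⟩
    beta_reduce at hz
    obtain ⟨k, rfl⟩ : (n : ℤ) ∣ m := by
      have hr := congrArg rightHom hz
      simp only [map_mul, map_zpow, rightHom_inl, rightHom_thetaEl, one_mul] at hr
      rw [← ZMod.addOrderOf_one n, ← orderOf_ofAdd_eq_addOrderOf]
      exact orderOf_dvd_iff_zpow_eq_one.mpr hr
    rw [hθnk, ← map_mul] at hz
    exact ⟨e, he, k, (inl_injective hz).symm⟩
  · rintro ⟨e, he, k, rfl⟩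
    exact ⟨inl e, mem_map_of_mem _ he, _, ⟨(n : ℤ) * k, rfl⟩, by beta_reduce; rw [hθnk, ← map_mul]⟩

lemma not_TnSub_le (h10 : (1 : ZMod n) ≠ 0)
    (hH : ∀ z, inl z ∈ H ↔ ∃ e ∈ E, ∃ k : ℤ, z = e * fun _ => v ^ k)
    (hEF : E ≤ pi Set.univ fun _ => F) (hFv : F ⊓ zpowers v = ⊥)
    (hEab : ∀ x ∈ E, ∀ y ∈ E, x * y = y * x) (hTnonab : ∃ x ∈ T, ∃ y ∈ T, x * y ≠ y * x) :
    ¬ TnSub n T ≤ H := by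
  intro hle
  have hE (u : X) (hu : u ∈ T) : (Pi.mulSingle 0 u : ZMod n → X) ∈ E := by
    obtain ⟨e, he, k, hek⟩ := (hH _).mp (hle (inl_mulSingle_mem_TnSub (i := 0) hu))
    have he1 : e 1 * v ^ k = 1 := by
      simpa [Pi.mulSingle_eq_of_ne h10] using (congrFun hek 1).symm
    have hvk : v ^ k ∈ F ⊓ zpowers v := by
      refine mem_inf.mpr ⟨?_, zpow_mem (mem_zpowers v) k⟩
      rw [eq_inv_of_mul_eq_one_right he1]
      exact inv_mem ((mem_pi _).mp (hEF he) 1 trivial)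
    rw [hFv, mem_bot] at hvk
    simpa [hek, hvk, ← Pi.one_def] using he
  obtain ⟨x, hx, y, hy, hxy⟩ := hTnonab
  exact hxy (by simpa using congrFun (hEab _ (hE x hx) _ (hE y hy)) 0)

lemma map_eval_comap_inl_inf_eq
    (hH : ∀ z, inl z ∈ H ↔ ∃ e ∈ E, ∃ k : ℤ, z = e * fun _ => v ^ k)
    (hEF : E ≤ pi Set.univ fun _ => F) (hFT : F ≤ T) (hvF : zpowers v ≤ normalizer (F : Set X))
    {i : ZMod n} (hEi : E.map (Pi.evalMonoidHom (fun _ => X) i) = F) :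
    Subgroup.map (Pi.evalMonoidHom (fun _ => X) i) (Subgroup.comap inl (TnSub n T ⊓ H)) =
      (F ⊔ zpowers v) ⊓ T := by
  ext u
  constructor
  · rintro ⟨z, hz, rfl⟩
    obtain ⟨hzT, hzH⟩ := mem_inf.mp hz
    obtain ⟨e, he, k, rfl⟩ := (hH z).mp hzH
    exact mem_inf.mpr ⟨mul_mem_sup ((mem_pi _).mp (hEF he) i trivial)
      (zpow_mem (mem_zpowers v) k), inl_mem_TnSub_iff.mp hzT i⟩
  · intro hu
    obtain ⟨huFv, huT⟩ := mem_inf.mp hu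
    rw [← SetLike.mem_coe, coe_mul_of_right_le_normalizer_left F _ hvF] at huFv
    obtain ⟨_, hf, _, ⟨k, rfl⟩, rfl⟩ := huFv
    rw [← hEi] at hf
    obtain ⟨e, he, rfl⟩ := hf
    have heT (j : ZMod n) : e j ∈ T := hFT ((mem_pi _).mp (hEF he) j trivial)
    have hvk : v ^ k ∈ T := by simpa using mul_mem (inv_mem (heT i)) huT
    exact ⟨e * fun _ => v ^ k,
      mem_inf.mpr ⟨inl_mem_TnSub_iff.mpr fun j => mul_mem (heT j) hvk,
        (hH _).mpr ⟨e, he, k, rfl⟩⟩, rfl⟩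

end BaseOfH

theorem stmt_16_general
    (q n : ℕ)
    (r s t : ℕ)
    (hn : n = q + 1) (hn3 : 3 < n) (hnst : n = 2 ^ s * r ^ t)
    (hs : 2 ≤ s ∨ Even q)
    {X : Type*} [Group X] [Finite X] (T : Subgroup X)
    (hTnormal : T.Normal) (hTsimple : IsSimpleGroup ↥T)
    (hTnonab : ∃ x ∈ T, ∃ y ∈ T, x * y ≠ y * x)
    (hcent : Subgroup.centralizer (T : Set X) = ⊥)
    (hindex : T.index ≤ 2)
    (F : Subgroup X) (b c : X)
    (hFcard : Nat.card ↥F = q)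
    (hb : orderOf b = (q - 1) / Nat.gcd 2 (q - 1))
    (hc : orderOf c = Nat.gcd 2 (q - 1))
    (hbc : b * c = c * b)
    (hFR : ∀ x ∈ Subgroup.closure ({b, c} : Set X), ∀ y ∈ F, x * y * x⁻¹ ∈ F)
    (hregtrans : ∀ y ∈ F, y ≠ 1 → ∀ z ∈ F, z ≠ 1 →
      ∃ x ∈ Subgroup.closure ({b, c} : Set X), x * y * x⁻¹ = z)
    (hregfree : ∀ x ∈ Subgroup.closure ({b, c} : Set X),
      (∃ y ∈ F, y ≠ 1 ∧ x * y * x⁻¹ = y) → x = 1)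
    (E : Subgroup (ZMod n → X))
    (hEF : E ≤ Subgroup.pi Set.univ fun _ => F)
    (hEnorm : ∀ x ∈ Subgroup.map (SemidirectProduct.inl : (ZMod n → X) →* Wr n X) E,
      thetaEl n b c * x * (thetaEl n b c)⁻¹ ∈
        Subgroup.map (SemidirectProduct.inl : (ZMod n → X) →* Wr n X) E)
    (hEab : ∀ x ∈ E, ∀ y ∈ E, x * y = y * x)
    (hEproj : ∀ i : ZMod n, Subgroup.map (Pi.evalMonoidHom (fun _ => X) i) E = F)
    :
    (∀ x : Wr n X, (∀ g ∈ Gsub n T b c, g * x * g⁻¹ ∈ Hsub n E b c) → x = 1) ∧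
    NormalIn (TnSub n T) (Gsub n T b c) ∧
    TnSub n T ≠ ⊥ ∧
    (∀ N : Subgroup (Wr n X), NormalIn N (Gsub n T b c) → N ≠ ⊥ → TnSub n T ≤ N) ∧
    (∀ g ∈ Gsub n T b c, ∃ h ∈ Hsub n E b c, ∃ t' ∈ TnSub n T, g = h * t') ∧
    (∀ i : ZMod n,
      Subgroup.map (Pi.evalMonoidHom (fun _ => X) i)
        (Subgroup.comap (SemidirectProduct.inl : (ZMod n → X) →* Wr n X)
          (TnSub n T ⊓ Hsub n E b c)) =
      (F ⊔ Subgroup.closure ({b, c} : Set X)) ⊓ T) := by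
  have : NeZero n := ⟨by omega⟩
  have h10 : (1 : ZMod n) ≠ 0 := by
    have : Fact (1 < n) := ⟨by omega⟩
    exact one_ne_zero
  have hbc : Commute b c := hbc
  have hbq : orderOf b ∣ q - 1 := hb ▸ Nat.div_dvd_of_dvd (Nat.gcd_dvd_right 2 (q - 1))
  have hcq : orderOf c ∣ q - 1 := hc ▸ Nat.gcd_dvd_right 2 (q - 1)
  have hθ := thetaEl_pow_self_eq_sq_mul (show n = q - 1 + 2 by omega) hbc
    (orderOf_dvd_iff_pow_eq_one.mp hbq) (orderOf_dvd_iff_pow_eq_one.mp hcq)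
  have h4 : Even q ∨ 4 ∣ q + 1 := hs.symm.imp id fun h => hn ▸ hnst ▸ (pow_dvd_pow 2 h).mul_right _
  have hC := closure_pair_eq_zpowers_sq_mul hbc (hb ▸ odd_div_gcd_two_sub_one (by omega) h4)
    (orderOf_dvd_iff_pow_eq_one.mp (hc ▸ Nat.gcd_dvd_left 2 (q - 1)))
  have hH (z : ZMod n → X) := inl_mem_Hsub_iff (z := z) hEnorm hθ
  have hFT : F ≤ T := le_of_index_lt_card (by omega) fun y hy hy1 z hz hz1 =>
    (hregtrans y hy hy1 z hz hz1).imp fun _ hx => hx.2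
  have hFv : F ⊓ zpowers (b ^ 2 * c) = ⊥ := (eq_bot_iff_forall _).mpr fun w hw => by
    by_contra hw1
    exact hw1 (hregfree w (hC ▸ (mem_inf.mp hw).2) ⟨w, (mem_inf.mp hw).1, hw1, by group⟩)
  have hmin (N : Subgroup (Wr n X)) :=
    TnSub_le_of_forall_conj_mem (b := b) (c := c) (N := N) hTnormal hTsimple hcent
  refine ⟨fun x => eq_one_of_forall_conj_mem hmin (not_TnSub_le h10 hH hEF hFv hEab hTnonab),
    ⟨le_sup_left, fun g _ x hx => (TnSub_normal hTnormal).conj_mem x hx g⟩,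
    TnSub_ne_bot ((nontrivial_iff_ne_bot T).mp inferInstance), fun N hN => hmin N hN.2,
    fun g => exists_mem_Hsub_mul_mem_TnSub hTnormal, fun i => ?_⟩
  rw [hC]
  exact map_eval_comap_inl_inf_eq hH hEF hFT
    (hC ▸ fun x hx => mem_normalizer_fintype (hFR x hx)) (hEproj i)

/-- **Theorem 6.1 (qusi-p-g).** In the wreath-product setup, with `G = T^n⟨θ⟩` and
`H = E:⟨θ⟩`: `H` is core-free in `G`; `T^n` is the unique minimal normal subgroup of `G`;
`T^n` is transitive on `[G:H]` (so `G` is quasiprimitive of PA type on `[G:H]`); and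
`π_i(T^n ∩ H) = R ∩ T` for every `i`, i.e. `T^n ∩ H` is a subdirect product of
`(R ∩ T)^n`. -/
theorem stmt_16
    (p f q n : ℕ) (hp : p.Prime) (hf : 0 < f) (hq : q = p ^ f)
    (r s t : ℕ) (hr : r.Prime) (hrodd : Odd r)
    (hn : n = q + 1) (hn3 : 3 < n) (hnst : n = 2 ^ s * r ^ t)
    (hs : 2 ≤ s ∨ Even q)
    {X : Type*} [Group X] [Finite X] (T : Subgroup X)
    (hTnormal : T.Normal) (hTsimple : IsSimpleGroup ↥T)
    (hTnonab : ∃ x ∈ T, ∃ y ∈ T, x * y ≠ y * x)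
    (hcent : Subgroup.centralizer (T : Set X) = ⊥)
    (hindex : T.index ≤ 2)
    (F : Subgroup X) (b c : X)
    (hFcard : Nat.card ↥F = q) (hFelem : ∀ x ∈ F, x ^ p = 1)
    (hFab : ∀ x ∈ F, ∀ y ∈ F, x * y = y * x)
    (hb : orderOf b = (q - 1) / Nat.gcd 2 (q - 1))
    (hc : orderOf c = Nat.gcd 2 (q - 1))
    (hbc : b * c = c * b)
    (hFR : ∀ x ∈ Subgroup.closure ({b, c} : Set X), ∀ y ∈ F, x * y * x⁻¹ ∈ F)
    (hregtrans : ∀ y ∈ F, y ≠ 1 → ∀ z ∈ F, z ≠ 1 →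
      ∃ x ∈ Subgroup.closure ({b, c} : Set X), x * y * x⁻¹ = z)
    (hregfree : ∀ x ∈ Subgroup.closure ({b, c} : Set X),
      (∃ y ∈ F, y ≠ 1 ∧ x * y * x⁻¹ = y) → x = 1)
    (E : Subgroup (ZMod n → X))
    (hEF : E ≤ Subgroup.pi Set.univ fun _ => F)
    (hEnorm : ∀ x ∈ Subgroup.map (SemidirectProduct.inl : (ZMod n → X) →* Wr n X) E,
      thetaEl n b c * x * (thetaEl n b c)⁻¹ ∈
        Subgroup.map (SemidirectProduct.inl : (ZMod n → X) →* Wr n X) E)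
    (hEcard : Nat.card ↥E = q ^ 2)
    (hEelem : ∀ x ∈ E, x ^ p = 1)
    (hEab : ∀ x ∈ E, ∀ y ∈ E, x * y = y * x)
    (hEtrans : ∀ x ∈ E, x ≠ 1 → ∀ y ∈ E, y ≠ 1 →
      ∃ m : ℤ, (thetaEl n b c) ^ m *
        (SemidirectProduct.inl : (ZMod n → X) →* Wr n X) x * ((thetaEl n b c) ^ m)⁻¹ =
          (SemidirectProduct.inl : (ZMod n → X) →* Wr n X) y)
    (hEproj : ∀ i : ZMod n, Subgroup.map (Pi.evalMonoidHom (fun _ => X) i) E = F)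
    (hEker : Function.Injective
      fun i : ZMod n => E ⊓ MonoidHom.ker (Pi.evalMonoidHom (fun _ => X) i))
    :
    (∀ x : Wr n X, (∀ g ∈ Gsub n T b c, g * x * g⁻¹ ∈ Hsub n E b c) → x = 1) ∧
    NormalIn (TnSub n T) (Gsub n T b c) ∧
    TnSub n T ≠ ⊥ ∧
    (∀ N : Subgroup (Wr n X), NormalIn N (Gsub n T b c) → N ≠ ⊥ → TnSub n T ≤ N) ∧
    (∀ g ∈ Gsub n T b c, ∃ h ∈ Hsub n E b c, ∃ t' ∈ TnSub n T, g = h * t') ∧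
    (∀ i : ZMod n,
      Subgroup.map (Pi.evalMonoidHom (fun _ => X) i)
        (Subgroup.comap (SemidirectProduct.inl : (ZMod n → X) →* Wr n X)
          (TnSub n T ⊓ Hsub n E b c)) =
      (F ⊔ Subgroup.closure ({b, c} : Set X)) ⊓ T) :=
  stmt_16_general q n r s t hn hn3 hnst hs T hTnormal hTsimple hTnonab hcent hindex F b c hFcard hb
    hc hbc hFR hregtrans hregfree E hEF hEnorm hEab hEproj
end
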